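/- arXiv:2206.05188 — 9 statements merged into one kernel-verified Lean document; each statement's English description precedes it below -/
import Mathlib

section
/- Let H ∈ ℝ^{N×N} be symmetric positive semidefinite, μ > 0, b ∈ (0,1), β ∈ ℝ and B ∈ ℝ^{N×N} with ‖βB‖ ≤ bμ/(‖H‖ + μ), and let g ∈ ℝ^N. If d = −(H + μI)^{-1}(I − βB)g, then gᵀd ≤ −((1 − b)/(‖H‖ + μ))‖g‖². In particular, if g ≠ 0 then d is a descent direction (gᵀd < 0). -/
open scoped InnerProductSpace

set_option maxHeartbeats 1000000

lemma psd_cs {N : ℕ} (T : EuclideanSpace ℝ (Fin N) →L[ℝ] EuclideanSpace ℝ (Fin N))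
    (hsa : IsSelfAdjoint T) (hpsd : ∀ v, 0 ≤ ⟪T v, v⟫_ℝ)
    (v w : EuclideanSpace ℝ (Fin N)) :
    ⟪T v, w⟫_ℝ ^ 2 ≤ ⟪T v, v⟫_ℝ * ⟪T w, w⟫_ℝ := by
  have hsym := hsa.isSymmetric
  have key : ∀ t : ℝ, 0 ≤ ⟪T w, w⟫_ℝ * (t * t) + (2 * ⟪T v, w⟫_ℝ) * t + ⟪T v, v⟫_ℝ := by
    intro t
    have h0 := hpsd (v + t • w)
    have : ⟪T (v + t • w), v + t • w⟫_ℝ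
        = ⟪T w, w⟫_ℝ * (t * t) + (2 * ⟪T v, w⟫_ℝ) * t + ⟪T v, v⟫_ℝ := by
      rw [map_add, map_smul]
      rw [inner_add_left, inner_add_right, inner_add_right]
      rw [inner_smul_left, inner_smul_right, inner_smul_left, inner_smul_right]
      have hcomm : ⟪T w, v⟫_ℝ = ⟪T v, w⟫_ℝ := by
        rw [real_inner_comm]; exact (hsym v w).symm
      simp [hcomm]
      ring
    linarith [this ▸ h0]
  have hdisc := discrim_le_zero key
  rw [discrim] at hdisc
  nlinarith [hdisc]


/-- Lemma 2(i). For `H` symmetric positive semidefinite, `μ > 0`,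
`b ∈ (0,1)`, `‖βB‖ ≤ bμ/(‖H‖+μ)` and `d = -(H + μI)⁻¹(I - βB) g`, one has
`gᵀd ≤ -((1-b)/(‖H‖+μ)) ‖g‖²`; in particular `d` is a descent direction when `g ≠ 0`. -/
theorem splitted_direction_descent {N : ℕ}
    (H B : EuclideanSpace ℝ (Fin N) →L[ℝ] EuclideanSpace ℝ (Fin N))
    (μ b β : ℝ) (g d : EuclideanSpace ℝ (Fin N))
    (hH : IsSelfAdjoint H) (hPSD : ∀ v, 0 ≤ ⟪H v, v⟫_ℝ)
    (hμ : 0 < μ) (hb : b ∈ Set.Ioo (0 : ℝ) 1)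
    (hB : ‖β • B‖ ≤ b * μ / (‖H‖ + μ))
    (hd : (H + μ • 1) d = -((1 - β • B) g)) :
    ⟪g, d⟫_ℝ ≤ -((1 - b) / (‖H‖ + μ)) * ‖g‖ ^ 2 ∧ (g ≠ 0 → ⟪g, d⟫_ℝ < 0) := by
  obtain ⟨hb0, hb1⟩ := hb
  set L : ℝ := ‖H‖ + μ with hLdef
  have hL : 0 < L := by positivity
  set T : EuclideanSpace ℝ (Fin N) →L[ℝ] EuclideanSpace ℝ (Fin N) := H + μ • 1 with hTdef
  have hT_sa : IsSelfAdjoint T := IsSelfAdjoint.add (R := EuclideanSpace ℝ (Fin N) →L[ℝ] EuclideanSpace ℝ (Fin N)) hH ((IsSelfAdjoint.all μ).smul (IsSelfAdjoint.one _))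
  have hTapp : ∀ v, T v = H v + μ • v := by
    intro v
    simp [hTdef, ContinuousLinearMap.add_apply]
  have hTquad : ∀ v, μ * ‖v‖ ^ 2 ≤ ⟪T v, v⟫_ℝ := by
    intro v
    rw [hTapp, inner_add_left, real_inner_smul_left, real_inner_self_eq_norm_sq]
    nlinarith [hPSD v]
  have hTpsd : ∀ v, 0 ≤ ⟪T v, v⟫_ℝ := fun v => le_trans (by positivity) (hTquad v)
  have hTub : ∀ v, ⟪T v, v⟫_ℝ ≤ L * ‖v‖ ^ 2 := by
    intro v
    rw [hTapp, inner_add_left, real_inner_smul_left, real_inner_self_eq_norm_sq]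
    have h1 : ⟪H v, v⟫_ℝ ≤ ‖H v‖ * ‖v‖ := real_inner_le_norm _ _
    have h2 : ‖H v‖ ≤ ‖H‖ * ‖v‖ := H.le_opNorm v
    nlinarith [norm_nonneg v]
  have hTkey : ∀ v, ‖T v‖ ^ 2 ≤ L * ⟪T v, v⟫_ℝ := by
    intro v
    by_cases h : T v = 0
    · have : (0:ℝ) ≤ L * ⟪T v, v⟫_ℝ := mul_nonneg hL.le (hTpsd v)
      simpa [h] using this
    · have hcs := psd_cs T hT_sa hTpsd v (T v)
      have hub := hTub (T v)
      have hps := hTpsd v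
      have hs2 : 0 < ‖T v‖ ^ 2 := by
        have : 0 < ‖T v‖ := norm_pos_iff.mpr h
        positivity
      have hself : ⟪T v, T v⟫_ℝ = ‖T v‖ ^ 2 := real_inner_self_eq_norm_sq _
      rw [hself] at hcs
      nlinarith [hcs, mul_le_mul_of_nonneg_left hub hps, hs2]
  have hμnorm : ∀ v, μ * ‖v‖ ≤ ‖T v‖ := by
    intro v
    by_cases h : v = 0
    · simp [h]
    · have h1 := hTquad v
      have h2 : ⟪T v, v⟫_ℝ ≤ ‖T v‖ * ‖v‖ := real_inner_le_norm _ _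
      have hv : 0 < ‖v‖ := norm_pos_iff.mpr h
      nlinarith
  have hinj : Function.Injective T := by
    intro x y hxy
    have h0 : T (x - y) = 0 := by rw [map_sub, hxy, sub_self]
    have h1 := hμnorm (x - y)
    rw [h0, norm_zero] at h1
    have h2 : ‖x - y‖ ≤ 0 := by nlinarith [norm_nonneg (x - y)]
    have h3 : x - y = 0 := by rw [← norm_le_zero_iff]; exact h2
    exact sub_eq_zero.mp h3
  have hsurj : Function.Surjective T :=
    (LinearMap.injective_iff_surjective
      (f := (T : EuclideanSpace ℝ (Fin N) →ₗ[ℝ] EuclideanSpace ℝ (Fin N)))).mp hinj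
  obtain ⟨d₁, hd₁⟩ := hsurj g
  obtain ⟨d₂, hd₂⟩ := hsurj ((β • B) g)
  have hdeq : d = -d₁ + d₂ := by
    apply hinj
    rw [hd, map_add, map_neg, hd₁, hd₂]
    simp only [ContinuousLinearMap.neg_apply, ContinuousLinearMap.sub_apply,
      ContinuousLinearMap.one_apply]
    abel
  have hb1' : ‖g‖ ^ 2 ≤ L * ⟪g, d₁⟫_ℝ := by
    have h := hTkey d₁
    rw [hd₁] at h
    exact h
  have hd1norm : μ * ‖d₁‖ ≤ ‖g‖ := by
    have h := hμnorm d₁; rw [hd₁] at h; exact h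
  have hb2 : ⟪g, d₂⟫_ℝ ≤ b / L * ‖g‖ ^ 2 := by
    have hgd2 : ⟪g, d₂⟫_ℝ = ⟪d₁, (β • B) g⟫_ℝ := by
      rw [← hd₂]
      nth_rewrite 1 [← hd₁]
      exact hT_sa.isSymmetric d₁ d₂
    rw [hgd2]
    have h1 : ⟪d₁, (β • B) g⟫_ℝ ≤ ‖d₁‖ * ‖(β • B) g‖ := real_inner_le_norm _ _
    have h2 : ‖(β • B) g‖ ≤ ‖β • B‖ * ‖g‖ := (β • B).le_opNorm g
    have hε0 : (0 : ℝ) ≤ ‖β • B‖ := norm_nonneg _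
    have hεL : ‖β • B‖ * L ≤ b * μ := by
      have := (le_div_iff₀ hL).mp hB
      linarith
    have hd1n : (0:ℝ) ≤ ‖d₁‖ := norm_nonneg _
    have hgn : (0:ℝ) ≤ ‖g‖ := norm_nonneg _
    rw [div_mul_eq_mul_div, le_div_iff₀ hL]
    have st1 : ⟪d₁, (β • B) g⟫_ℝ ≤ ‖d₁‖ * (‖β • B‖ * ‖g‖) :=
      le_trans h1 (mul_le_mul_of_nonneg_left h2 hd1n)
    have st2 : ⟪d₁, (β • B) g⟫_ℝ * L ≤ ‖d₁‖ * (‖β • B‖ * ‖g‖) * L :=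
      mul_le_mul_of_nonneg_right st1 hL.le
    have st3 : ‖d₁‖ * (‖β • B‖ * ‖g‖) * L = (‖d₁‖ * ‖g‖) * (‖β • B‖ * L) := by ring
    have st4 : (‖d₁‖ * ‖g‖) * (‖β • B‖ * L) ≤ (‖d₁‖ * ‖g‖) * (b * μ) :=
      mul_le_mul_of_nonneg_left hεL (mul_nonneg hd1n hgn)
    have st5 : (‖d₁‖ * ‖g‖) * (b * μ) = (b * ‖g‖) * (μ * ‖d₁‖) := by ring
    have st6 : (b * ‖g‖) * (μ * ‖d₁‖) ≤ (b * ‖g‖) * ‖g‖ :=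
      mul_le_mul_of_nonneg_left hd1norm (mul_nonneg hb0.le hgn)
    have st7 : (b * ‖g‖) * ‖g‖ = b * ‖g‖ ^ 2 := by ring
    linarith [st2, st3.le, st3.ge, st4, st5.le, st5.ge, st6, st7.le, st7.ge]
  have hinner : ⟪g, d⟫_ℝ = -⟪g, d₁⟫_ℝ + ⟪g, d₂⟫_ℝ := by
    rw [hdeq, inner_add_right, inner_neg_right]
  have hgd1 : ‖g‖ ^ 2 / L ≤ ⟪g, d₁⟫_ℝ := (div_le_iff₀' hL).mpr hb1'
  have hmain : ⟪g, d⟫_ℝ ≤ -((1 - b) / L) * ‖g‖ ^ 2 := by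
    have heq : -((1 - b) / L) * ‖g‖ ^ 2 = -(‖g‖ ^ 2 / L) + b / L * ‖g‖ ^ 2 := by ring
    rw [hinner, heq]
    linarith
  refine ⟨hmain, fun hg => ?_⟩
  have hgpos : 0 < ‖g‖ := norm_pos_iff.mpr hg
  have hneg : -((1 - b) / L) * ‖g‖ ^ 2 < 0 := by
    have h : 0 < (1 - b) / L := by
      apply div_pos <;> linarith
    have := mul_pos h (pow_pos hgpos 2)
    linarith
  linarith
end

section
/- Let F : ℝ^N → ℝ be differentiable with gradient g at a point x, let H ∈ ℝ^{N×N} be symmetric positive semidefinite, μ > 0, b ∈ (0,1), β ∈ ℝ and B ∈ ℝ^{N×N} with ‖βB‖ ≤ bμ/(‖H‖ + μ), c ∈ (0,1), and let d = −(H + μI)^{-1}(I − βB)g(x). If t > 0 satisfies the Armijo condition F(x + t d) ≤ F(x) + c t dᵀg(x), then F(x + t d) ≤ F(x) − c t (1 − b)‖g(x)‖²/(‖H‖ + μ). -/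
open scoped InnerProductSpace

set_option maxHeartbeats 1000000 in
/-- Lemma 2(ii). If `d = -(H + μI)⁻¹(I - βB) g(x)` and `t > 0` satisfies the
Armijo condition `F(x + t d) ≤ F(x) + c t dᵀg(x)`, then
`F(x + t d) ≤ F(x) - c t (1-b) ‖g(x)‖² / (‖H‖ + μ)`. -/
theorem armijo_decrease_bound {N : ℕ}
    (F : EuclideanSpace ℝ (Fin N) → ℝ)
    (x gx : EuclideanSpace ℝ (Fin N)) (hF : HasGradientAt F gx x)
    (H B : EuclideanSpace ℝ (Fin N) →L[ℝ] EuclideanSpace ℝ (Fin N))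
    (μ b β c t : ℝ) (d : EuclideanSpace ℝ (Fin N))
    (hH : IsSelfAdjoint H) (hPSD : ∀ v, 0 ≤ ⟪H v, v⟫_ℝ)
    (hμ : 0 < μ) (hb : b ∈ Set.Ioo (0 : ℝ) 1) (hc : c ∈ Set.Ioo (0 : ℝ) 1)
    (hB : ‖β • B‖ ≤ b * μ / (‖H‖ + μ))
    (hd : (H + μ • 1) d = -((1 - β • B) gx))
    (ht : 0 < t)
    (hArmijo : F (x + t • d) ≤ F x + c * t * ⟪d, gx⟫_ℝ) :
    F (x + t • d) ≤ F x - c * t * (1 - b) * ‖gx‖ ^ 2 / (‖H‖ + μ) := by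
  set M : EuclideanSpace ℝ (Fin N) →L[ℝ] EuclideanSpace ℝ (Fin N) := H + μ • 1 with hM
  set S : ℝ := ‖H‖ + μ with hSdef
  have hS : (0:ℝ) < S := by positivity
  have hMapp : ∀ v, M v = H v + μ • v := by intro v; simp [hM]
  have hMsym : ∀ u v, ⟪M u, v⟫_ℝ = ⟪u, M v⟫_ℝ := by
    intro u v
    have hsym := hH.isSymmetric u v
    simp only [ContinuousLinearMap.coe_coe] at hsym
    simp only [hMapp, inner_add_left, inner_add_right, real_inner_smul_left,
      real_inner_smul_right, hsym]
  have hMpos : ∀ v, μ * ‖v‖ ^ 2 ≤ ⟪M v, v⟫_ℝ := by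
    intro v
    have := hPSD v
    simp only [hMapp, inner_add_left, real_inner_smul_left,
      real_inner_self_eq_norm_sq] at *
    nlinarith
  have hMnorm : ‖M‖ ≤ S := by
    calc ‖M‖ ≤ ‖H‖ + ‖μ • (1 : EuclideanSpace ℝ (Fin N) →L[ℝ] EuclideanSpace ℝ (Fin N))‖ :=
          norm_add_le _ _
    _ ≤ ‖H‖ + μ := by
        gcongr
        calc ‖μ • (1 : EuclideanSpace ℝ (Fin N) →L[ℝ] EuclideanSpace ℝ (Fin N))‖
            ≤ ‖μ‖ * ‖(1 : EuclideanSpace ℝ (Fin N) →L[ℝ] EuclideanSpace ℝ (Fin N))‖ :=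
              ContinuousLinearMap.opNorm_smul_le _ _
        _ ≤ ‖μ‖ * 1 := by gcongr; exact ContinuousLinearMap.norm_id_le
        _ = μ := by rw [mul_one, Real.norm_eq_abs, abs_of_pos hμ]
  have hMinj : Function.Injective M := by
    intro u v huv
    have h0 : M (u - v) = 0 := by rw [map_sub, huv, sub_self]
    have h1 := hMpos (u - v)
    rw [h0, inner_zero_left] at h1
    have hsq : ‖u - v‖ ^ 2 = 0 := le_antisymm (by nlinarith) (sq_nonneg _)
    have : u - v = 0 := norm_eq_zero.mp (pow_eq_zero_iff two_ne_zero |>.mp hsq)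
    exact sub_eq_zero.mp this
  have hMsurj : Function.Surjective M :=
    (LinearMap.injective_iff_surjective (f := (M : EuclideanSpace ℝ (Fin N) →ₗ[ℝ] EuclideanSpace ℝ (Fin N)))).mp hMinj
  obtain ⟨e, he⟩ := hMsurj gx
  have hMgg : ⟪M gx, gx⟫_ℝ ≤ S * ‖gx‖ ^ 2 := by
    calc ⟪M gx, gx⟫_ℝ ≤ ‖M gx‖ * ‖gx‖ := real_inner_le_norm _ _
    _ ≤ (‖M‖ * ‖gx‖) * ‖gx‖ := by gcongr; exact M.le_opNorm gx
    _ ≤ (S * ‖gx‖) * ‖gx‖ := by gcongr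
    _ = S * ‖gx‖ ^ 2 := by ring
  have hkey : ‖gx‖ ^ 2 / S ≤ ⟪gx, e⟫_ℝ := by
    have hpos := hMpos (e - (1/S) • gx)
    have h1 : ⟪M gx, e⟫_ℝ = ‖gx‖ ^ 2 := by
      rw [hMsym, he, real_inner_self_eq_norm_sq]
    have h2 : ⟪gx, gx⟫_ℝ = ‖gx‖ ^ 2 := real_inner_self_eq_norm_sq gx
    have h3 : ⟪e, gx⟫_ℝ = ⟪gx, e⟫_ℝ := real_inner_comm _ _
    have hexp : ⟪M (e - (1/S) • gx), e - (1/S) • gx⟫_ℝ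
        = ⟪gx, e⟫_ℝ - (2/S) * ‖gx‖ ^ 2 + (1/S)^2 * ⟪M gx, gx⟫_ℝ := by
      rw [map_sub, map_smul]
      simp only [inner_sub_left, inner_sub_right, real_inner_smul_left,
        real_inner_smul_right, he, h1, h2, h3]
      all_goals ring
    have hnn : (0:ℝ) ≤ ⟪gx, e⟫_ℝ - (2/S) * ‖gx‖ ^ 2 + (1/S)^2 * ⟪M gx, gx⟫_ℝ := by
      rw [← hexp]; nlinarith [sq_nonneg ‖e - (1/S) • gx‖]
    have hb2 : (1/S)^2 * ⟪M gx, gx⟫_ℝ ≤ (1/S) * ‖gx‖ ^ 2 := by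
      calc (1/S)^2 * ⟪M gx, gx⟫_ℝ ≤ (1/S)^2 * (S * ‖gx‖ ^ 2) := mul_le_mul_of_nonneg_left hMgg (by positivity)
      _ = (1/S) * ‖gx‖ ^ 2 := by field_simp
    have h4 : ‖gx‖ ^ 2 / S = (1/S) * ‖gx‖ ^ 2 := by ring
    have h7 : (2/S) * ‖gx‖ ^ 2 = 2 * ((1/S) * ‖gx‖ ^ 2) := by ring
    linarith
  have hen : μ * ‖e‖ ≤ ‖gx‖ := by
    have h1 := hMpos e
    rw [he] at h1
    have h2 : ⟪gx, e⟫_ℝ ≤ ‖gx‖ * ‖e‖ := real_inner_le_norm _ _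
    rcases eq_or_lt_of_le (norm_nonneg e) with h | h
    · rw [← h, mul_zero]; exact norm_nonneg _
    · nlinarith
  have hMd : M d = β • (B gx) - gx := by
    rw [hd]
    simp only [ContinuousLinearMap.sub_apply, ContinuousLinearMap.smul_apply,
      ContinuousLinearMap.one_apply, neg_sub]
  have hdg : ⟪d, gx⟫_ℝ ≤ -((1 - b) * ‖gx‖ ^ 2 / S) := by
    have h1 : ⟪d, gx⟫_ℝ = ⟪β • B gx, e⟫_ℝ - ⟪gx, e⟫_ℝ := by
      calc ⟪d, gx⟫_ℝ = ⟪d, M e⟫_ℝ := by rw [he]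
      _ = ⟪M d, e⟫_ℝ := (hMsym d e).symm
      _ = ⟪β • B gx, e⟫_ℝ - ⟪gx, e⟫_ℝ := by
          rw [hMd, inner_sub_left]
    have h2 : ⟪β • B gx, e⟫_ℝ ≤ (b * μ / S) * (‖gx‖ * ‖e‖) := by
      calc ⟪β • B gx, e⟫_ℝ = ⟪(β • B) gx, e⟫_ℝ := by
            rw [ContinuousLinearMap.smul_apply]
      _ ≤ ‖(β • B) gx‖ * ‖e‖ := real_inner_le_norm _ _
      _ ≤ (‖β • B‖ * ‖gx‖) * ‖e‖ := by gcongr; exact (β • B).le_opNorm gx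
      _ ≤ ((b * μ / S) * ‖gx‖) * ‖e‖ := by gcongr
      _ = (b * μ / S) * (‖gx‖ * ‖e‖) := by ring
    have h3 : (b * μ / S) * (‖gx‖ * ‖e‖) ≤ (b / S) * ‖gx‖ ^ 2 := by
      have hmm : μ * (‖gx‖ * ‖e‖) ≤ ‖gx‖ * ‖gx‖ := by nlinarith [norm_nonneg gx]
      have hb0 : 0 < b := hb.1
      rw [div_mul_eq_mul_div, div_mul_eq_mul_div, div_le_div_iff₀ hS hS]
      have hmul := mul_le_mul_of_nonneg_left hmm (by positivity : (0:ℝ) ≤ b * S)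
      nlinarith [hmul]
    have h5 : ⟪β • B gx, e⟫_ℝ ≤ (b / S) * ‖gx‖ ^ 2 := le_trans h2 h3
    have h6 : (b / S) * ‖gx‖ ^ 2 - ‖gx‖ ^ 2 / S = -((1 - b) * ‖gx‖ ^ 2 / S) := by ring
    linarith
  have hct : 0 < c * t := mul_pos hc.1 ht
  calc F (x + t • d) ≤ F x + c * t * ⟪d, gx⟫_ℝ := hArmijo
  _ ≤ F x + c * t * (-((1 - b) * ‖gx‖ ^ 2 / S)) := by gcongr
  _ = F x - c * t * (1 - b) * ‖gx‖ ^ 2 / S := by ring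
end

section
/- Let J ∈ ℝ^{m×N}, R ∈ ℝ^m, g = JᵀR, let H ∈ ℝ^{N×N} be symmetric positive semidefinite, μ > 0, b ∈ (0,1), β ∈ ℝ and B ∈ ℝ^{N×N} with ‖βB‖ ≤ bμ/(‖H‖ + μ), γ = ‖I − βB‖, and d = −(H + μI)^{-1}(I − βB)g. Then for every t ∈ [0, 1/γ]: ‖R + t J d‖² ≤ ‖R‖² + t gᵀd + t²‖J‖²‖d‖² − t((1 − b)/γ²)(μ²/(‖H‖ + μ))‖d‖². -/
open scoped InnerProductSpace

set_option maxHeartbeats 1000000 in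
/-- Lemma 4. With `g = JᵀR`, `H` symmetric positive semidefinite, `μ > 0`,
`b ∈ (0,1)`, `‖βB‖ ≤ bμ/(‖H‖+μ)`, `γ = ‖I - βB‖` and `d = -(H + μI)⁻¹(I - βB) g`,
for every `t ∈ [0, 1/γ]` one has
`‖R + t J d‖² ≤ ‖R‖² + t gᵀd + t²‖J‖²‖d‖² - t ((1-b)/γ²)(μ²/(‖H‖+μ))‖d‖²`. -/
theorem linearized_residual_decrease {N m : ℕ}
    (J : EuclideanSpace ℝ (Fin N) →L[ℝ] EuclideanSpace ℝ (Fin m))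
    (R : EuclideanSpace ℝ (Fin m))
    (H B : EuclideanSpace ℝ (Fin N) →L[ℝ] EuclideanSpace ℝ (Fin N))
    (μ b β γ : ℝ) (g d : EuclideanSpace ℝ (Fin N))
    (hg : g = ContinuousLinearMap.adjoint J R)
    (hH : IsSelfAdjoint H) (hPSD : ∀ v, 0 ≤ ⟪H v, v⟫_ℝ)
    (hμ : 0 < μ) (hb : b ∈ Set.Ioo (0 : ℝ) 1)
    (hB : ‖β • B‖ ≤ b * μ / (‖H‖ + μ))
    (hγ : γ = ‖(1 : EuclideanSpace ℝ (Fin N) →L[ℝ] EuclideanSpace ℝ (Fin N)) - β • B‖)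
    (hd : (H + μ • 1) d = -((1 - β • B) g)) :
    ∀ t : ℝ, t ∈ Set.Icc 0 (1 / γ) →
      ‖R + t • J d‖ ^ 2 ≤
        ‖R‖ ^ 2 + t * ⟪g, d⟫_ℝ + t ^ 2 * ‖J‖ ^ 2 * ‖d‖ ^ 2
          - t * ((1 - b) / γ ^ 2) * (μ ^ 2 / (‖H‖ + μ)) * ‖d‖ ^ 2 := by
  obtain ⟨hb0, hb1⟩ := hb
  have hHnn : (0:ℝ) ≤ ‖H‖ := norm_nonneg _
  have hL : (0:ℝ) < ‖H‖ + μ := by linarith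
  set S : EuclideanSpace ℝ (Fin N) →L[ℝ] EuclideanSpace ℝ (Fin N) := H + μ • 1 with hSdef
  have hSapp : ∀ v : EuclideanSpace ℝ (Fin N), S v = H v + μ • v := by
    intro v
    simp [hSdef, ContinuousLinearMap.add_apply, ContinuousLinearMap.smul_apply,
      ContinuousLinearMap.one_apply]
  -- coercivity of S
  have hScoer : ∀ v : EuclideanSpace ℝ (Fin N), μ * ‖v‖ ^ 2 ≤ ⟪S v, v⟫_ℝ := by
    intro v
    rw [hSapp, inner_add_left, real_inner_smul_left, real_inner_self_eq_norm_sq]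
    linarith [hPSD v]
  have hSpos : ∀ v : EuclideanSpace ℝ (Fin N), 0 ≤ ⟪S v, v⟫_ℝ := fun v =>
    le_trans (by positivity) (hScoer v)
  -- symmetry of S
  have hHsym := ContinuousLinearMap.isSelfAdjoint_iff_isSymmetric.mp hH
  have hSsym : ∀ x y : EuclideanSpace ℝ (Fin N), ⟪S x, y⟫_ℝ = ⟪x, S y⟫_ℝ := by
    intro x y
    rw [hSapp x, hSapp y, inner_add_left, inner_add_right, real_inner_smul_left,
      real_inner_smul_right]
    have h := hHsym x y
    simp only [ContinuousLinearMap.coe_coe] at h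
    rw [h]
  -- Cauchy–Schwarz for the PSD form of S
  have hCS : ∀ x y : EuclideanSpace ℝ (Fin N),
      ⟪S x, y⟫_ℝ ^ 2 ≤ ⟪S x, x⟫_ℝ * ⟪S y, y⟫_ℝ := by
    intro x y
    have h := discrim_le_zero (a := ⟪S y, y⟫_ℝ) (b := 2 * ⟪S x, y⟫_ℝ) (c := ⟪S x, x⟫_ℝ) ?_
    · rw [discrim] at h; nlinarith
    · intro s
      have hexp : ⟪S (x + s • y), x + s • y⟫_ℝ
          = ⟪S y, y⟫_ℝ * s ^ 2 + 2 * ⟪S x, y⟫_ℝ * s + ⟪S x, x⟫_ℝ := by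
        have hyx : ⟪S y, x⟫_ℝ = ⟪S x, y⟫_ℝ := by
          rw [hSsym y x, real_inner_comm]
        simp only [map_add, map_smul, inner_add_left, inner_add_right,
          real_inner_smul_left, real_inner_smul_right, hyx]
        ring
      have := hSpos (x + s • y)
      rw [hexp] at this
      linarith
  -- lower bound for ‖S v‖
  have hSlow : ∀ v : EuclideanSpace ℝ (Fin N), μ * ‖v‖ ≤ ‖S v‖ := by
    intro v
    rcases eq_or_ne ‖v‖ 0 with h0 | h0
    · rw [h0]; simp [norm_nonneg]
    · have h1 := hScoer v
      have h2 := real_inner_le_norm (S v) v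
      have h3 : 0 < ‖v‖ := lt_of_le_of_ne (norm_nonneg v) (Ne.symm h0)
      nlinarith
  -- key inequality on ⟪g, d⟫
  have key : ⟪g, d⟫_ℝ ≤ -(((1 - b) / γ ^ 2) * (μ ^ 2 / (‖H‖ + μ)) * ‖d‖ ^ 2) := by
    rcases Nat.eq_zero_or_pos N with hN | hN
    · subst hN
      have hd0 : d = 0 := by
        ext i; exact i.elim0
      rw [hd0]
      simp only [inner_zero_right, norm_zero]
      rw [show ((1 - b) / γ ^ 2) * (μ ^ 2 / (‖H‖ + μ)) * (0:ℝ) ^ 2 = 0 from by ring,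
        neg_zero]
    · have hne : EuclideanSpace.single (⟨0, hN⟩ : Fin N) (1:ℝ) ≠ 0 := by
        intro h
        have h1 := EuclideanSpace.norm_single (𝕜 := ℝ) (⟨0, hN⟩ : Fin N) (1:ℝ)
        rw [h] at h1
        simp at h1
      haveI : Nontrivial (EuclideanSpace ℝ (Fin N)) := nontrivial_of_ne _ _ hne
      have hone : ‖(1 : EuclideanSpace ℝ (Fin N) →L[ℝ] EuclideanSpace ℝ (Fin N))‖ = 1 := by
        rw [ContinuousLinearMap.one_def]
        exact ContinuousLinearMap.norm_id
      have hEb : ‖β • B‖ < 1 := by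
        refine lt_of_le_of_lt hB ?_
        rw [div_lt_one hL]; nlinarith
      have hγpos : 0 < γ := by
        rw [hγ]
        calc (0:ℝ) < 1 - ‖β • B‖ := by linarith
          _ = ‖(1 : EuclideanSpace ℝ (Fin N) →L[ℝ] EuclideanSpace ℝ (Fin N))‖ - ‖β • B‖ := by
              rw [hone]
          _ ≤ ‖(1 : EuclideanSpace ℝ (Fin N) →L[ℝ] EuclideanSpace ℝ (Fin N)) - β • B‖ :=
              norm_sub_norm_le _ _
      -- norm bound on S
      have hSnorm : ‖S‖ ≤ ‖H‖ + μ := by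
        refine ContinuousLinearMap.opNorm_le_bound _ (by positivity) fun v => ?_
        rw [hSapp]
        calc ‖H v + μ • v‖ ≤ ‖H v‖ + ‖μ • v‖ := norm_add_le _ _
          _ ≤ ‖H‖ * ‖v‖ + μ * ‖v‖ := by
              have h7 := ContinuousLinearMap.le_opNorm H v
              rw [norm_smul, Real.norm_eq_abs, abs_of_pos hμ]
              linarith
          _ = (‖H‖ + μ) * ‖v‖ := by ring
      -- S is surjective
      have hinj : Function.Injective S := by
        intro x y hxy
        have hz : S (x - y) = 0 := by rw [map_sub, hxy, sub_self]
        have h1 := hScoer (x - y)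
        rw [hz] at h1
        simp only [inner_zero_left] at h1
        have hn0 : x - y = 0 := by
          by_contra hne2
          have hp : 0 < ‖x - y‖ := norm_pos_iff.mpr hne2
          nlinarith [mul_pos hμ (mul_pos hp hp)]
        exact sub_eq_zero.mp hn0
      have hsurj : Function.Surjective S := by
        have hinj' : Function.Injective
            (S : EuclideanSpace ℝ (Fin N) →ₗ[ℝ] EuclideanSpace ℝ (Fin N)) := by
          rw [ContinuousLinearMap.coe_coe]
          exact hinj
        have h := LinearMap.injective_iff_surjective.mp hinj'
        rwa [ContinuousLinearMap.coe_coe] at h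
      obtain ⟨u, hu⟩ := hsurj g
      -- basic norm facts
      have hunorm : μ * ‖u‖ ≤ ‖g‖ := by
        have := hSlow u; rwa [hu] at this
      have hMg : ‖(1 - β • B) g‖ ≤ γ * ‖g‖ := by
        rw [hγ]; exact ContinuousLinearMap.le_opNorm _ _
      have hdnorm : μ * ‖d‖ ≤ γ * ‖g‖ := by
        have h1 := hSlow d
        have h2 : ‖S d‖ = ‖(1 - β • B) g‖ := by rw [hd, norm_neg]
        linarith [h1.trans_eq h2]
      -- ⟪g,d⟫ decomposition
      have hgd : ⟪g, d⟫_ℝ = -⟪S u, u⟫_ℝ + ⟪u, (β • B) g⟫_ℝ := by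
        have h1 : ⟪g, d⟫_ℝ = ⟪u, S d⟫_ℝ := by
          rw [← hu, hSsym]
        rw [h1, hd]
        have h2 : (1 - β • B) g = g - (β • B) g := by
          simp [ContinuousLinearMap.sub_apply]
        rw [h2]
        simp only [inner_neg_right, inner_sub_right]
        rw [← hu, ← hSsym]
        ring
      -- lower bound ⟪S u, u⟫ ≥ ‖g‖²/(‖H‖+μ)
      have hSuu : ‖g‖ ^ 2 ≤ (‖H‖ + μ) * ⟪S u, u⟫_ℝ := by
        have hcs := hCS u (S u)
        have h1 : ⟪S u, S u⟫_ℝ = ‖S u‖ ^ 2 := real_inner_self_eq_norm_sq _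
        have h2 : ⟪S (S u), S u⟫_ℝ ≤ (‖H‖ + μ) * ‖S u‖ ^ 2 := by
          have h3 := real_inner_le_norm (S (S u)) (S u)
          have hb1 : ‖S (S u)‖ ≤ ‖S‖ * ‖S u‖ := ContinuousLinearMap.le_opNorm _ _
          nlinarith [norm_nonneg (S u), ContinuousLinearMap.opNorm_nonneg S]
        rcases eq_or_ne ‖S u‖ 0 with h0 | h0
        · have hg0 : g = 0 := by rw [← hu]; exact norm_eq_zero.mp h0
          rw [hg0]
          simp only [norm_zero]
          nlinarith [hSpos u]
        · have hpos : 0 < ‖S u‖ := lt_of_le_of_ne (norm_nonneg _) (Ne.symm h0)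
          have hg2 : ‖g‖ = ‖S u‖ := by rw [← hu]
          rw [hg2]
          nlinarith [hSpos u, mul_pos hpos hpos,
            mul_le_mul_of_nonneg_left h2 (hSpos u)]
      -- upper bound on perturbation term
      have hpert : ⟪u, (β • B) g⟫_ℝ ≤ (b / (‖H‖ + μ)) * ‖g‖ ^ 2 := by
        have h1 := real_inner_le_norm u ((β • B) g)
        have h2 : ‖(β • B) g‖ ≤ (b * μ / (‖H‖ + μ)) * ‖g‖ := by
          calc ‖(β • B) g‖ ≤ ‖β • B‖ * ‖g‖ := ContinuousLinearMap.le_opNorm _ _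
            _ ≤ (b * μ / (‖H‖ + μ)) * ‖g‖ :=
                mul_le_mul_of_nonneg_right hB (norm_nonneg _)
        have h3 : ⟪u, (β • B) g⟫_ℝ ≤ ‖u‖ * ((b * μ / (‖H‖ + μ)) * ‖g‖) := by
          refine h1.trans ?_
          exact mul_le_mul_of_nonneg_left h2 (norm_nonneg _)
        have h4 : ‖u‖ * ((b * μ / (‖H‖ + μ)) * ‖g‖) ≤ (b / (‖H‖ + μ)) * ‖g‖ ^ 2 := by
          have h5 : μ * ‖u‖ * (b / (‖H‖ + μ) * ‖g‖) ≤ ‖g‖ * (b / (‖H‖ + μ) * ‖g‖) := by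
            refine mul_le_mul_of_nonneg_right hunorm ?_
            positivity
          calc ‖u‖ * ((b * μ / (‖H‖ + μ)) * ‖g‖) = μ * ‖u‖ * (b / (‖H‖ + μ) * ‖g‖) := by
                field_simp
            _ ≤ ‖g‖ * (b / (‖H‖ + μ) * ‖g‖) := h5
            _ = (b / (‖H‖ + μ)) * ‖g‖ ^ 2 := by ring
        linarith
      -- combine: L * ⟪g,d⟫ ≤ -(1-b) ‖g‖²
      have h1 : (‖H‖ + μ) * ⟪g, d⟫_ℝ ≤ -((1 - b) * ‖g‖ ^ 2) := by
        rw [hgd]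
        have h6 := mul_le_mul_of_nonneg_left hpert hL.le
        have hLb : (‖H‖ + μ) * (b / (‖H‖ + μ) * ‖g‖ ^ 2) = b * ‖g‖ ^ 2 := by
          field_simp
        nlinarith
      have h2 : μ ^ 2 * ‖d‖ ^ 2 ≤ γ ^ 2 * ‖g‖ ^ 2 := by
        nlinarith [mul_self_le_mul_self (by positivity : (0:ℝ) ≤ μ * ‖d‖) hdnorm]
      have h3 : γ ^ 2 * ((‖H‖ + μ) * ⟪g, d⟫_ℝ) ≤ -((1 - b) * (μ ^ 2 * ‖d‖ ^ 2)) := by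
        nlinarith [mul_le_mul_of_nonneg_left h1 (sq_nonneg γ),
          mul_le_mul_of_nonneg_left h2 (by linarith : (0:ℝ) ≤ 1 - b)]
      have hrw : -(((1 - b) / γ ^ 2) * (μ ^ 2 / (‖H‖ + μ)) * ‖d‖ ^ 2)
          = (-((1 - b) * (μ ^ 2 * ‖d‖ ^ 2))) / (γ ^ 2 * (‖H‖ + μ)) := by
        field_simp
      rw [hrw, le_div_iff₀ (by positivity)]
      nlinarith [h3]
  -- finish
  intro t ht
  obtain ⟨ht0, _⟩ := ht
  have hRJ : ⟪R, J d⟫_ℝ = ⟪g, d⟫_ℝ := by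
    rw [hg, ContinuousLinearMap.adjoint_inner_left]
  have hexp : ‖R + t • J d‖ ^ 2 = ‖R‖ ^ 2 + 2 * (t * ⟪g, d⟫_ℝ) + t ^ 2 * ‖J d‖ ^ 2 := by
    rw [@norm_add_sq_real, real_inner_smul_right, hRJ, norm_smul, mul_pow, Real.norm_eq_abs,
      sq_abs]
  have hJd : ‖J d‖ ≤ ‖J‖ * ‖d‖ := ContinuousLinearMap.le_opNorm _ _
  have htkey := mul_le_mul_of_nonneg_left key ht0
  rw [hexp]
  nlinarith [mul_le_mul_of_nonneg_left
      (mul_self_le_mul_self (norm_nonneg (J d)) hJd) (sq_nonneg t),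
    norm_nonneg (J d), norm_nonneg d, ContinuousLinearMap.opNorm_nonneg J]
end

section
/- Let R : ℝ^N → ℝ^m be continuously differentiable with L-Lipschitz Jacobian J. Fix x ∈ ℝ^N and write J = J(x), R = R(x), g = JᵀR. Let H ∈ ℝ^{N×N} be symmetric positive semidefinite, μ > 0, b ∈ (0,1), β ∈ ℝ and B ∈ ℝ^{N×N} with ‖βB‖ ≤ bμ/(‖H‖ + μ), γ = ‖I − βB‖, and d = −(H + μI)^{-1}(I − βB)g. Then for every t ∈ [0, 1/γ]: ‖R(x + t d)‖² ≤ ‖R‖² + t gᵀd + t‖d‖²((L²/4)t³‖d‖² + t‖J‖² + L t‖R‖ + L t²‖J‖‖d‖ − ((1 − b)/γ²)(μ²/(‖H‖ + μ))). -/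
open scoped InnerProductSpace

open MeasureTheory in
/-- Quadratic Taylor bound from Lipschitz derivative. -/
theorem taylor_lip_aux {N m : ℕ} (L : ℝ) (hL : 0 ≤ L)
    (R : EuclideanSpace ℝ (Fin N) → EuclideanSpace ℝ (Fin m))
    (J : EuclideanSpace ℝ (Fin N) → (EuclideanSpace ℝ (Fin N) →L[ℝ] EuclideanSpace ℝ (Fin m)))
    (hJ : ∀ x, HasFDerivAt R (J x) x)
    (hLip : ∀ x y, ‖J x - J y‖ ≤ L * ‖x - y‖)
    (x v : EuclideanSpace ℝ (Fin N)) :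
    ‖R (x + v) - R x - (J x) v‖ ≤ L / 2 * ‖v‖ ^ 2 := by
  have hJc : Continuous J := by
    refine (LipschitzWith.of_dist_le_mul (K := Real.toNNReal L) ?_).continuous
    intro a c
    rw [dist_eq_norm, dist_eq_norm]
    calc ‖J a - J c‖ ≤ L * ‖a - c‖ := hLip a c
      _ = (Real.toNNReal L : ℝ) * ‖a - c‖ := by rw [Real.coe_toNNReal L hL]
  have hf : ∀ s : ℝ, HasDerivAt (fun s : ℝ => R (x + s • v)) ((J (x + s • v)) v) s := by
    intro s
    have h1 : HasDerivAt (fun s : ℝ => x + s • v) v s := by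
      simpa using ((hasDerivAt_id s).smul_const v).const_add x
    exact (hJ (x + s • v)).comp_hasDerivAt s h1
  have hcont : Continuous fun s : ℝ => (J (x + s • v)) v :=
    Continuous.clm_apply (hJc.comp (by continuity)) continuous_const
  have hint : IntervalIntegrable (fun s : ℝ => (J (x + s • v)) v) volume 0 1 :=
    hcont.intervalIntegrable 0 1
  have hFTC : (∫ s in (0:ℝ)..1, (J (x + s • v)) v) = R (x + v) - R x := by
    have h := intervalIntegral.integral_eq_sub_of_hasDerivAt (f := fun s : ℝ => R (x + s • v))
      (f' := fun s : ℝ => (J (x + s • v)) v) (fun s _ => hf s) hint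
    simpa using h
  have hsub : R (x + v) - R x - (J x) v
      = ∫ s in (0:ℝ)..1, ((J (x + s • v)) v - (J x) v) := by
    rw [intervalIntegral.integral_sub hint (intervalIntegrable_const), hFTC]
    simp
  rw [hsub]
  have hbd : ∀ s ∈ Set.uIoc (0:ℝ) 1, ‖(J (x + s • v)) v - (J x) v‖ ≤ L * ‖v‖ ^ 2 * s := by
    intro s hs
    rw [Set.uIoc_of_le zero_le_one] at hs
    have hs0 : 0 < s := hs.1
    have hs1 : s ≤ 1 := hs.2
    calc ‖(J (x + s • v)) v - (J x) v‖
        = ‖(J (x + s • v) - J x) v‖ := by simp [ContinuousLinearMap.sub_apply]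
      _ ≤ ‖J (x + s • v) - J x‖ * ‖v‖ := ContinuousLinearMap.le_opNorm _ v
      _ ≤ (L * ‖x + s • v - x‖) * ‖v‖ := by
          have := hLip (x + s • v) x
          exact mul_le_mul_of_nonneg_right this (norm_nonneg v)
      _ = L * ‖v‖ ^ 2 * s := by
          have : x + s • v - x = s • v := by abel
          rw [this, norm_smul, Real.norm_eq_abs, abs_of_pos hs0]
          ring
  have hgint : IntervalIntegrable (fun s : ℝ => L * ‖v‖ ^ 2 * s) volume 0 1 :=
    (continuous_const.mul continuous_id).intervalIntegrable 0 1
  have h := intervalIntegral.norm_integral_le_abs_of_norm_le (μ := volume)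
    (f := fun s : ℝ => (J (x + s • v)) v - (J x) v) (g := fun s : ℝ => L * ‖v‖ ^ 2 * s)
    ((ae_restrict_iff' measurableSet_uIoc).2 (Filter.Eventually.of_forall hbd)) hgint
  calc ‖∫ s in (0:ℝ)..1, ((J (x + s • v)) v - (J x) v)‖
      ≤ |∫ s in (0:ℝ)..1, L * ‖v‖ ^ 2 * s| := h
    _ = L / 2 * ‖v‖ ^ 2 := by
        rw [intervalIntegral.integral_const_mul, integral_id]
        rw [abs_of_nonneg (by positivity)]
        norm_num
        ring

set_option maxHeartbeats 4000000 in
set_option synthInstance.maxHeartbeats 200000 in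
/-- Lemma 5. With `R` continuously differentiable with `L`-Lipschitz
Jacobian `J`, and at a fixed `x`, `g = J(x)ᵀR(x)`, `d = -(H + μI)⁻¹(I - βB) g`,
`γ = ‖I - βB‖`, for every `t ∈ [0, 1/γ]` the full residual satisfies the stated bound. -/
theorem nonlinear_residual_decrease {N m : ℕ} (L : ℝ)
    (R : EuclideanSpace ℝ (Fin N) → EuclideanSpace ℝ (Fin m))
    (J : EuclideanSpace ℝ (Fin N) → (EuclideanSpace ℝ (Fin N) →L[ℝ] EuclideanSpace ℝ (Fin m)))
    (hC1 : ContDiff ℝ 1 R)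
    (hJ : ∀ x, HasFDerivAt R (J x) x)
    (hLip : ∀ x y, ‖J x - J y‖ ≤ L * ‖x - y‖)
    (x : EuclideanSpace ℝ (Fin N))
    (H B : EuclideanSpace ℝ (Fin N) →L[ℝ] EuclideanSpace ℝ (Fin N))
    (μ b β γ : ℝ) (g d : EuclideanSpace ℝ (Fin N))
    (hg : g = ContinuousLinearMap.adjoint (J x) (R x))
    (hH : IsSelfAdjoint H) (hPSD : ∀ v, 0 ≤ ⟪H v, v⟫_ℝ)
    (hμ : 0 < μ) (hb : b ∈ Set.Ioo (0 : ℝ) 1)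
    (hB : ‖β • B‖ ≤ b * μ / (‖H‖ + μ))
    (hγ : γ = ‖(1 : EuclideanSpace ℝ (Fin N) →L[ℝ] EuclideanSpace ℝ (Fin N)) - β • B‖)
    (hd : (H + μ • 1) d = -((1 - β • B) g)) :
    ∀ t : ℝ, t ∈ Set.Icc 0 (1 / γ) →
      ‖R (x + t • d)‖ ^ 2 ≤
        ‖R x‖ ^ 2 + t * ⟪g, d⟫_ℝ
          + t * ‖d‖ ^ 2 * ((L ^ 2 / 4) * t ^ 3 * ‖d‖ ^ 2 + t * ‖J x‖ ^ 2
            + L * t * ‖R x‖ + L * t ^ 2 * ‖J x‖ * ‖d‖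
            - ((1 - b) / γ ^ 2) * (μ ^ 2 / (‖H‖ + μ))) := by
  obtain ⟨hb0, hb1⟩ := hb
  have hHn : (0:ℝ) ≤ ‖H‖ := norm_nonneg H
  have hHμ : (0:ℝ) < ‖H‖ + μ := by linarith
  have hsb : ‖β • B‖ * (‖H‖ + μ) ≤ b * μ := by
    rw [← le_div_iff₀ hHμ]; exact hB
  have hs1 : ‖β • B‖ < 1 := by
    have h1 : b * μ / (‖H‖ + μ) < 1 := by
      rw [div_lt_one hHμ]; nlinarith
    exact lt_of_le_of_lt hB h1
  intro t ht
  obtain ⟨ht0, ht1⟩ := ht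
  by_cases hd0 : d = 0
  · -- degenerate case: d = 0, hence g = 0
    have hg0 : g = 0 := by
      have h1 : (1 - β • B) g = 0 := by
        have h2 := hd
        rw [hd0, map_zero] at h2
        exact neg_eq_zero.mp h2.symm
      have h2 : g = (β • B) g := by
        have h3 := h1
        rw [ContinuousLinearMap.sub_apply, ContinuousLinearMap.one_apply,
          sub_eq_zero] at h3
        exact h3
      by_contra hgne
      have h4 : ‖g‖ ≤ ‖β • B‖ * ‖g‖ := by
        conv_lhs => rw [h2]
        exact ContinuousLinearMap.le_opNorm _ g
      have h5 : 0 < ‖g‖ := norm_pos_iff.mpr hgne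
      nlinarith
    rw [hd0, hg0]
    simp
  -- main case
  have hnd : 0 < ‖d‖ := norm_pos_iff.mpr hd0
  haveI : Nontrivial (EuclideanSpace ℝ (Fin N)) := nontrivial_of_ne d 0 hd0
  have hL0 : 0 ≤ L := by
    have h1 : (0:ℝ) ≤ ‖J x - J (x + d)‖ := norm_nonneg _
    have h2 := hLip x (x + d)
    have h3 : x - (x + d) = -d := by abel
    rw [h3, norm_neg] at h2
    nlinarith
  set A : EuclideanSpace ℝ (Fin N) →L[ℝ] EuclideanSpace ℝ (Fin N) := H + μ • 1 with hA
  have hA_app : ∀ u, A u = H u + μ • u := by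
    intro u
    simp [hA, ContinuousLinearMap.add_apply]
  have hAsym : ∀ u w, ⟪A u, w⟫_ℝ = ⟪u, A w⟫_ℝ := by
    have hH' := ContinuousLinearMap.isSelfAdjoint_iff'.mp hH
    intro u w
    have h1 : ⟪H u, w⟫_ℝ = ⟪u, H w⟫_ℝ := by
      conv_lhs => rw [← hH']
      rw [ContinuousLinearMap.adjoint_inner_left]
    rw [hA_app, hA_app, inner_add_left, inner_add_right, h1,
      real_inner_smul_left, real_inner_smul_right]
  have hAco : ∀ u, μ * ‖u‖ ^ 2 ≤ ⟪A u, u⟫_ℝ := by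
    intro u
    rw [hA_app, inner_add_left, real_inner_smul_left, real_inner_self_eq_norm_sq]
    nlinarith [hPSD u]
  have hApos : ∀ u, 0 ≤ ⟪A u, u⟫_ℝ := fun u =>
    le_trans (by positivity) (hAco u)
  have hAnorm : ‖A‖ ≤ ‖H‖ + μ := by
    calc ‖A‖ ≤ ‖H‖ + ‖μ • (1 : EuclideanSpace ℝ (Fin N) →L[ℝ] EuclideanSpace ℝ (Fin N))‖ :=
          norm_add_le H _
      _ ≤ ‖H‖ + μ := by
          have h1 : ‖(1 : EuclideanSpace ℝ (Fin N) →L[ℝ] EuclideanSpace ℝ (Fin N))‖ = 1 := by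
            rw [ContinuousLinearMap.one_def]; exact ContinuousLinearMap.norm_id
          have h2 : ‖μ • (1 : EuclideanSpace ℝ (Fin N) →L[ℝ] EuclideanSpace ℝ (Fin N))‖
              ≤ ‖μ‖ * ‖(1 : EuclideanSpace ℝ (Fin N) →L[ℝ] EuclideanSpace ℝ (Fin N))‖ :=
            norm_smul_le μ (1 : EuclideanSpace ℝ (Fin N) →L[ℝ] EuclideanSpace ℝ (Fin N))
          rw [h1, Real.norm_eq_abs, abs_of_pos hμ] at h2
          linarith
  have hker : ∀ u, A u = 0 → u = 0 := by
    intro u hu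
    have h1 := hAco u
    rw [hu] at h1
    simp only [inner_zero_left] at h1
    have h2 : ‖u‖ ^ 2 = 0 := le_antisymm (by nlinarith) (sq_nonneg _)
    have h3 : ‖u‖ = 0 := by
      have := sq_eq_zero_iff.mp h2
      exact this
    simpa using h3
  have hsurj : Function.Surjective A := by
    have hinj : Function.Injective (A : EuclideanSpace ℝ (Fin N) →ₗ[ℝ]
        EuclideanSpace ℝ (Fin N)) := by
      intro u w huw
      have h1 : A (u - w) = 0 := by
        simp only [map_sub]
        simpa [sub_eq_zero] using huw
      have := hker _ h1
      exact sub_eq_zero.mp this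
    exact LinearMap.injective_iff_surjective.mp hinj
  have hgne : g ≠ 0 := by
    intro h0
    apply hd0
    apply hker d
    rw [hd, h0]
    simp
  have hng : 0 < ‖g‖ := norm_pos_iff.mpr hgne
  obtain ⟨e, he⟩ := hsurj g
  have hCg : ∀ u : EuclideanSpace ℝ (Fin N), (1 - β • B) u = u - (β • B) u := by
    intro u; simp [ContinuousLinearMap.sub_apply]
  -- inner product decomposition
  have h9 : ⟪g, d⟫_ℝ = -⟪e, g⟫_ℝ + ⟪e, (β • B) g⟫_ℝ := by
    calc ⟪g, d⟫_ℝ = ⟪A e, d⟫_ℝ := by rw [he]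
      _ = ⟪e, A d⟫_ℝ := hAsym e d
      _ = ⟪e, -(g - (β • B) g)⟫_ℝ := by rw [hd, hCg]
      _ = -⟪e, g⟫_ℝ + ⟪e, (β • B) g⟫_ℝ := by
          rw [inner_neg_right, inner_sub_right]; ring
  -- Cauchy-Schwarz for the PSD form of A
  have hCS : (⟪A e, g⟫_ℝ) ^ 2 ≤ ⟪A e, e⟫_ℝ * ⟪A g, g⟫_ℝ := by
    have hq : ∀ c : ℝ, 0 ≤ ⟪A g, g⟫_ℝ * (c * c) + (2 * ⟪A e, g⟫_ℝ) * c + ⟪A e, e⟫_ℝ := by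
      intro c
      have h1 := hApos (e + c • g)
      have h2 : ⟪A (e + c • g), e + c • g⟫_ℝ
          = ⟪A g, g⟫_ℝ * (c * c) + (2 * ⟪A e, g⟫_ℝ) * c + ⟪A e, e⟫_ℝ := by
        have hge : ⟪A g, e⟫_ℝ = ⟪A e, g⟫_ℝ := by
          rw [hAsym g e, real_inner_comm]
        simp only [map_add, map_smul, inner_add_left, inner_add_right,
          real_inner_smul_left, real_inner_smul_right, hge]
        ring
      linarith [h2 ▸ h1]
    have hdis := discrim_le_zero hq
    rw [discrim] at hdis
    nlinarith
  have hAeg : ⟪A e, g⟫_ℝ = ‖g‖ ^ 2 := by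
    rw [he, real_inner_self_eq_norm_sq]
  have hAgg : ⟪A g, g⟫_ℝ ≤ (‖H‖ + μ) * ‖g‖ ^ 2 := by
    calc ⟪A g, g⟫_ℝ ≤ ‖A g‖ * ‖g‖ := real_inner_le_norm _ _
      _ ≤ (‖A‖ * ‖g‖) * ‖g‖ :=
          mul_le_mul_of_nonneg_right (ContinuousLinearMap.le_opNorm A g) (norm_nonneg g)
      _ ≤ (‖H‖ + μ) * ‖g‖ ^ 2 := by nlinarith [norm_nonneg g]
  have hAee : ⟪A e, e⟫_ℝ = ⟪e, g⟫_ℝ := by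
    rw [← he]
    exact real_inner_comm _ _
  have hegpos : 0 ≤ ⟪e, g⟫_ℝ := by rw [← hAee]; exact hApos e
  have h_eg' : ‖g‖ ^ 2 ≤ ⟪e, g⟫_ℝ * (‖H‖ + μ) := by
    rw [hAeg, hAee] at hCS
    nlinarith [hAgg, hng, mul_pos hng hng]
  have h_eg : ‖g‖ ^ 2 / (‖H‖ + μ) ≤ ⟪e, g⟫_ℝ := by
    rw [div_le_iff₀ hHμ]
    linarith
  have h_e_norm : μ * ‖e‖ ≤ ‖g‖ := by
    have h1 : μ * ‖e‖ ^ 2 ≤ ⟪A e, e⟫_ℝ := hAco e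
    rw [hAee] at h1
    have h2 : ⟪e, g⟫_ℝ ≤ ‖e‖ * ‖g‖ := real_inner_le_norm e g
    rcases eq_or_lt_of_le (norm_nonneg e) with h3 | h3
    · nlinarith
    · have : μ * ‖e‖ * ‖e‖ ≤ ‖g‖ * ‖e‖ := by nlinarith
      exact le_of_mul_le_mul_right (by nlinarith) h3
  have hBg : ⟪e, (β • B) g⟫_ℝ ≤ b / (‖H‖ + μ) * ‖g‖ ^ 2 := by
    calc ⟪e, (β • B) g⟫_ℝ ≤ ‖e‖ * ‖(β • B) g‖ := real_inner_le_norm _ _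
      _ ≤ ‖e‖ * (‖β • B‖ * ‖g‖) :=
          mul_le_mul_of_nonneg_left (ContinuousLinearMap.le_opNorm _ g) (norm_nonneg e)
      _ ≤ b / (‖H‖ + μ) * ‖g‖ ^ 2 := by
          rw [div_mul_eq_mul_div, le_div_iff₀ hHμ]
          have h1 : μ * ‖e‖ * (‖β • B‖ * (‖H‖ + μ)) ≤ ‖g‖ * (b * μ) := by
            apply mul_le_mul h_e_norm hsb (by positivity) (by positivity)
          nlinarith [norm_nonneg (β • B), norm_nonneg e, norm_nonneg g]
  have hkey1 : ⟪g, d⟫_ℝ ≤ -((1 - b) / (‖H‖ + μ)) * ‖g‖ ^ 2 := by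
    rw [h9]
    have h1 : -⟪e, g⟫_ℝ ≤ -(‖g‖ ^ 2 / (‖H‖ + μ)) := by linarith
    have h2 : -((1 - b) / (‖H‖ + μ)) * ‖g‖ ^ 2
        = -(‖g‖ ^ 2 / (‖H‖ + μ)) + b / (‖H‖ + μ) * ‖g‖ ^ 2 := by ring
    linarith
  -- gamma bounds
  have hγ1 : 1 - ‖β • B‖ ≤ γ := by
    rw [hγ]
    have h1 : ‖(1 : EuclideanSpace ℝ (Fin N) →L[ℝ] EuclideanSpace ℝ (Fin N))‖ = 1 :=
      ContinuousLinearMap.norm_id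
    calc 1 - ‖β • B‖ = ‖(1 : EuclideanSpace ℝ (Fin N) →L[ℝ] EuclideanSpace ℝ (Fin N))‖
          - ‖β • B‖ := by rw [h1]
      _ ≤ ‖(1 : EuclideanSpace ℝ (Fin N) →L[ℝ] EuclideanSpace ℝ (Fin N)) - β • B‖ :=
          norm_sub_norm_le _ _
  have hγpos : 0 < γ := by linarith
  have h10 : μ * ‖d‖ ≤ γ * ‖g‖ := by
    have h1 : μ * ‖d‖ ^ 2 ≤ ⟪A d, d⟫_ℝ := hAco d
    have h2 : ⟪A d, d⟫_ℝ ≤ γ * ‖g‖ * ‖d‖ := by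
      rw [hd]
      calc ⟪-((1 - β • B) g), d⟫_ℝ ≤ ‖-((1 - β • B) g)‖ * ‖d‖ := real_inner_le_norm _ _
        _ ≤ γ * ‖g‖ * ‖d‖ := by
            rw [norm_neg]
            have h3 : ‖(1 - β • B) g‖ ≤ γ * ‖g‖ := by
              rw [hγ]
              exact ContinuousLinearMap.le_opNorm _ g
            exact mul_le_mul_of_nonneg_right h3 (norm_nonneg d)
    have h4 : μ * ‖d‖ * ‖d‖ ≤ γ * ‖g‖ * ‖d‖ := by
      have h5 : μ * ‖d‖ * ‖d‖ = μ * ‖d‖ ^ 2 := by ring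
      rw [h5]; exact h1.trans h2
    exact le_of_mul_le_mul_right h4 hnd
  have hgd2 : μ ^ 2 * ‖d‖ ^ 2 ≤ γ ^ 2 * ‖g‖ ^ 2 := by
    have h0 : 0 ≤ μ * ‖d‖ := by positivity
    have h1 := mul_le_mul h10 h10 h0 (le_trans h0 h10)
    calc μ ^ 2 * ‖d‖ ^ 2 = (μ * ‖d‖) * (μ * ‖d‖) := by ring
      _ ≤ (γ * ‖g‖) * (γ * ‖g‖) := h1
      _ = γ ^ 2 * ‖g‖ ^ 2 := by ring
  have hkey : ⟪g, d⟫_ℝ ≤ -((1 - b) / γ ^ 2 * (μ ^ 2 / (‖H‖ + μ))) * ‖d‖ ^ 2 := by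
    have hγ2 : (0:ℝ) < γ ^ 2 * (‖H‖ + μ) := by positivity
    have hkey2 : (1 - b) * (μ ^ 2 * ‖d‖ ^ 2) ≤ (1 - b) * (γ ^ 2 * ‖g‖ ^ 2) :=
      mul_le_mul_of_nonneg_left hgd2 (by linarith)
    have h1 : (1 - b) / γ ^ 2 * (μ ^ 2 / (‖H‖ + μ)) * ‖d‖ ^ 2
        ≤ (1 - b) / (‖H‖ + μ) * ‖g‖ ^ 2 := by
      have heq1 : (1 - b) / γ ^ 2 * (μ ^ 2 / (‖H‖ + μ)) * ‖d‖ ^ 2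
          = (1 - b) * (μ ^ 2 * ‖d‖ ^ 2) * (γ ^ 2 * (‖H‖ + μ))⁻¹ := by
        field_simp [hγpos.ne', hHμ.ne']
      have heq2 : (1 - b) / (‖H‖ + μ) * ‖g‖ ^ 2
          = (1 - b) * (γ ^ 2 * ‖g‖ ^ 2) * (γ ^ 2 * (‖H‖ + μ))⁻¹ := by
        field_simp [hγpos.ne', hHμ.ne']
      rw [heq1, heq2]
      exact mul_le_mul_of_nonneg_right hkey2 (by positivity)
    linarith
  -- Taylor bound
  have hTay := taylor_lip_aux L hL0 R J hJ hLip x (t • d)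
  have hvn : ‖t • d‖ = t * ‖d‖ := by
    rw [norm_smul, Real.norm_eq_abs, abs_of_nonneg ht0]
  rw [hvn] at hTay
  -- assemble
  set q : ℝ := ‖R (x + t • d) - R x - (J x) (t • d)‖ with hq
  set P : ℝ := ‖R x + t • ((J x) d)‖ with hP
  have hq0 : 0 ≤ q := norm_nonneg _
  have hqb : q ≤ L / 2 * (t * ‖d‖) ^ 2 := hTay
  have hJd : ‖(J x) d‖ ≤ ‖J x‖ * ‖d‖ := ContinuousLinearMap.le_opNorm _ d
  have hP0 : 0 ≤ P := norm_nonneg _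
  have hPb : P ≤ ‖R x‖ + t * (‖J x‖ * ‖d‖) := by
    calc P ≤ ‖R x‖ + ‖t • ((J x) d)‖ := norm_add_le _ _
      _ ≤ ‖R x‖ + t * (‖J x‖ * ‖d‖) := by
          rw [norm_smul, Real.norm_eq_abs, abs_of_nonneg ht0]
          have := mul_le_mul_of_nonneg_left hJd ht0
          linarith
  have hnorm1 : ‖R (x + t • d)‖ ≤ P + q := by
    calc ‖R (x + t • d)‖
        = ‖(R x + t • ((J x) d)) + (R (x + t • d) - R x - (J x) (t • d))‖ := by
          rw [map_smul]; congr 1; abel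
      _ ≤ P + q := norm_add_le _ _
  have hsq : ‖R (x + t • d)‖ ^ 2 ≤ (P + q) ^ 2 := by
    have := pow_le_pow_left₀ (norm_nonneg _) hnorm1 2
    exact this
  have hP2 : P ^ 2 = ‖R x‖ ^ 2 + 2 * (t * ⟪g, d⟫_ℝ) + t ^ 2 * ‖(J x) d‖ ^ 2 := by
    rw [hP, norm_add_sq_real, real_inner_smul_right, norm_smul, Real.norm_eq_abs]
    have h1 : ⟪R x, (J x) d⟫_ℝ = ⟪g, d⟫_ℝ := by
      rw [hg, ContinuousLinearMap.adjoint_inner_left]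
    rw [h1, mul_pow, sq_abs]
  have hcross : 2 * P * q ≤ 2 * (‖R x‖ + t * (‖J x‖ * ‖d‖)) * (L / 2 * (t * ‖d‖) ^ 2) := by
    have h1 : P * q ≤ (‖R x‖ + t * (‖J x‖ * ‖d‖)) * (L / 2 * (t * ‖d‖) ^ 2) :=
      mul_le_mul hPb hqb hq0 (by positivity)
    linarith
  have hq2 : q ^ 2 ≤ (L / 2 * (t * ‖d‖) ^ 2) ^ 2 := pow_le_pow_left₀ hq0 hqb 2
  have hJd2 : t ^ 2 * ‖(J x) d‖ ^ 2 ≤ t ^ 2 * (‖J x‖ * ‖d‖) ^ 2 :=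
    mul_le_mul_of_nonneg_left (pow_le_pow_left₀ (norm_nonneg _) hJd 2) (sq_nonneg t)
  have htkey : t * ⟪g, d⟫_ℝ ≤ t * (-((1 - b) / γ ^ 2 * (μ ^ 2 / (‖H‖ + μ))) * ‖d‖ ^ 2) :=
    mul_le_mul_of_nonneg_left hkey ht0
  calc ‖R (x + t • d)‖ ^ 2 ≤ (P + q) ^ 2 := hsq
    _ = P ^ 2 + 2 * P * q + q ^ 2 := by ring
    _ ≤ (‖R x‖ ^ 2 + 2 * (t * ⟪g, d⟫_ℝ) + t ^ 2 * ‖(J x) d‖ ^ 2)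
        + 2 * (‖R x‖ + t * (‖J x‖ * ‖d‖)) * (L / 2 * (t * ‖d‖) ^ 2)
        + (L / 2 * (t * ‖d‖) ^ 2) ^ 2 := by linarith [hP2, hcross, hq2]
    _ ≤ ‖R x‖ ^ 2 + t * ⟪g, d⟫_ℝ
          + t * ‖d‖ ^ 2 * ((L ^ 2 / 4) * t ^ 3 * ‖d‖ ^ 2 + t * ‖J x‖ ^ 2
            + L * t * ‖R x‖ + L * t ^ 2 * ‖J x‖ * ‖d‖
            - ((1 - b) / γ ^ 2) * (μ ^ 2 / (‖H‖ + μ))) := by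
        linarith only [htkey, hJd2]
end

section
/- Let R : ℝ^N → ℝ^m be continuously differentiable with L-Lipschitz Jacobian J, and let g(x) = J(x)ᵀR(x). Let D ⊂ ℝ^N be a convex set on which ‖J(x)‖ ≤ C_J for all x ∈ D. Then for all x, y ∈ D: ‖g(x) − g(y) − J(x)ᵀJ(x)(x − y)‖ ≤ (C_J L/2)‖x − y‖² + ‖(J(x) − J(y))ᵀR(y)‖. -/
open ContinuousLinearMap Set

/-- Quadratic Taylor remainder bound for a function with Lipschitz derivative. -/
lemma taylor_quad_bound {E F : Type*} [NormedAddCommGroup E] [NormedSpace ℝ E]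
    [NormedAddCommGroup F] [NormedSpace ℝ F] (L : ℝ)
    (R : E → F) (J : E → (E →L[ℝ] F))
    (hJ : ∀ x, HasFDerivAt R (J x) x)
    (hLip : ∀ x y, ‖J x - J y‖ ≤ L * ‖x - y‖) (x y : E) :
    ‖R y - R x - J x (y - x)‖ ≤ L / 2 * ‖y - x‖ ^ 2 := by
  set v := y - x with hv
  set f : ℝ → F := fun t => R (x + t • v) - R x - t • (J x v) with hf
  set f' : ℝ → F := fun t => (J (x + t • v)) v - J x v with hf'
  have hderiv : ∀ t : ℝ, HasDerivAt f (f' t) t := by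
    intro t
    have h1 : HasDerivAt (fun t : ℝ => x + t • v) v t := by
      simpa using ((hasDerivAt_id t).smul_const v).const_add x
    have h2 : HasDerivAt (fun t : ℝ => R (x + t • v)) ((J (x + t • v)) v) t :=
      (hJ (x + t • v)).comp_hasDerivAt t h1
    have h3 : HasDerivAt (fun t : ℝ => t • (J x v)) (J x v) t := by
      simpa using (hasDerivAt_id t).smul_const (J x v)
    exact (h2.sub_const (R x)).sub h3
  have hcont : ContinuousOn f (Icc (0:ℝ) 1) :=
    fun t _ => (hderiv t).continuousAt.continuousWithinAt
  have hder : ∀ t ∈ Ico (0:ℝ) 1, HasDerivWithinAt f (f' t) (Ici t) t :=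
    fun t _ => (hderiv t).hasDerivWithinAt
  have ha : ‖f 0‖ ≤ L * ‖v‖ ^ 2 * ((0:ℝ) ^ 2 / 2) := by simp [hf]
  have hB : ∀ t : ℝ, HasDerivAt (fun t => L * ‖v‖ ^ 2 * (t ^ 2 / 2)) (L * ‖v‖ ^ 2 * t) t := by
    intro t
    have h := ((hasDerivAt_pow 2 t).div_const 2).const_mul (L * ‖v‖ ^ 2)
    refine h.congr_deriv ?_
    push_cast; ring
  have hbound : ∀ t ∈ Ico (0:ℝ) 1, ‖f' t‖ ≤ L * ‖v‖ ^ 2 * t := by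
    intro t ht
    have h1 : ‖(J (x + t • v)) v - J x v‖ ≤ ‖J (x + t • v) - J x‖ * ‖v‖ := by
      simpa using (J (x + t • v) - J x).le_opNorm v
    have h2 : ‖J (x + t • v) - J x‖ ≤ L * (t * ‖v‖) := by
      have := hLip (x + t • v) x
      simpa [norm_smul, abs_of_nonneg ht.1] using this
    calc ‖f' t‖ ≤ (L * (t * ‖v‖)) * ‖v‖ :=
          h1.trans (mul_le_mul_of_nonneg_right h2 (norm_nonneg v))
      _ = L * ‖v‖ ^ 2 * t := by ring
  have key := image_norm_le_of_norm_deriv_right_le_deriv_boundary hcont hder ha hB hbound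
    (right_mem_Icc.2 zero_le_one)
  have hone : f 1 = R y - R x - J x v := by simp [hf, hv]
  rw [hone] at key
  calc ‖R y - R x - J x (y - x)‖ ≤ L * ‖v‖ ^ 2 * ((1:ℝ) ^ 2 / 2) := key
    _ = L / 2 * ‖y - x‖ ^ 2 := by rw [hv]; ring

/-- part of Lemma 10, inequality (46). With `g(x) = J(x)ᵀR(x)` and
`‖J(x)‖ ≤ C_J` on a convex set `D`, for all `x, y ∈ D`:
`‖g(x) - g(y) - J(x)ᵀJ(x)(x - y)‖ ≤ (C_J L / 2)‖x - y‖² + ‖(J(x) - J(y))ᵀR(y)‖`. -/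
theorem gradient_linearization_bound {N m : ℕ} (L CJ : ℝ)
    (R : EuclideanSpace ℝ (Fin N) → EuclideanSpace ℝ (Fin m))
    (J : EuclideanSpace ℝ (Fin N) → (EuclideanSpace ℝ (Fin N) →L[ℝ] EuclideanSpace ℝ (Fin m)))
    (hC1 : ContDiff ℝ 1 R)
    (hJ : ∀ x, HasFDerivAt R (J x) x)
    (hLip : ∀ x y, ‖J x - J y‖ ≤ L * ‖x - y‖)
    (D : Set (EuclideanSpace ℝ (Fin N))) (hD : Convex ℝ D)
    (hJbound : ∀ x ∈ D, ‖J x‖ ≤ CJ) :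
    ∀ x ∈ D, ∀ y ∈ D,
      ‖ContinuousLinearMap.adjoint (J x) (R x) - ContinuousLinearMap.adjoint (J y) (R y)
          - ContinuousLinearMap.adjoint (J x) (J x (x - y))‖ ≤
        CJ * L / 2 * ‖x - y‖ ^ 2 + ‖ContinuousLinearMap.adjoint (J x - J y) (R y)‖ := by
  intro x hx y hy
  have hsplit :
      ContinuousLinearMap.adjoint (J x) (R x) - ContinuousLinearMap.adjoint (J y) (R y)
          - ContinuousLinearMap.adjoint (J x) (J x (x - y)) =
        ContinuousLinearMap.adjoint (J x) (R x - R y - J x (x - y)) +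
          ContinuousLinearMap.adjoint (J x - J y) (R y) := by
    rw [map_sub ContinuousLinearMap.adjoint (J x) (J y)]
    simp only [ContinuousLinearMap.sub_apply, map_sub]
    abel
  rw [hsplit]
  refine (norm_add_le _ _).trans (add_le_add_left ?_ _)
  have h1 : ‖ContinuousLinearMap.adjoint (J x) (R x - R y - J x (x - y))‖ ≤
      ‖J x‖ * ‖R x - R y - J x (x - y)‖ := by
    have := (ContinuousLinearMap.adjoint (J x)).le_opNorm (R x - R y - J x (x - y))
    rwa [LinearIsometryEquiv.norm_map] at this
  have h2 : ‖R x - R y - J x (x - y)‖ ≤ L / 2 * ‖x - y‖ ^ 2 := by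
    have h := taylor_quad_bound L R J hJ hLip x y
    have heq : R x - R y - J x (x - y) = -(R y - R x - J x (y - x)) := by
      rw [show (x - y : EuclideanSpace ℝ (Fin N)) = -(y - x) by abel, map_neg]; abel
    rw [heq, norm_neg, show ‖x - y‖ = ‖y - x‖ from norm_sub_rev x y]
    exact h
  have hnn : (0:ℝ) ≤ L / 2 * ‖x - y‖ ^ 2 := (norm_nonneg _).trans h2
  have hJx := hJbound x hx
  calc ‖ContinuousLinearMap.adjoint (J x) (R x - R y - J x (x - y))‖
      ≤ ‖J x‖ * (L / 2 * ‖x - y‖ ^ 2) :=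
        h1.trans (mul_le_mul_of_nonneg_left h2 (norm_nonneg _))
    _ ≤ CJ * (L / 2 * ‖x - y‖ ^ 2) := mul_le_mul_of_nonneg_right hJx hnn
    _ = CJ * L / 2 * ‖x - y‖ ^ 2 := by ring
end

section
/- Let R : ℝ^N → ℝ^m be continuously differentiable with L-Lipschitz Jacobian J, and let D ⊂ ℝ^N be a convex set on which R is L₂-Lipschitz, i.e. ‖R(x) − R(y)‖ ≤ L₂‖x − y‖ for all x, y ∈ D. Then for all x, y, z̄ ∈ D: ‖(J(x) − J(y))ᵀR(y)‖ ≤ L L₂(‖x − z̄‖ + ‖y − z̄‖)‖y − z̄‖ + ‖J(x)ᵀR(z̄)‖ + ‖J(y)ᵀR(z̄)‖. -/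
/-- part of Lemma 10, inequality (47). If `R` is `L₂`-Lipschitz on the
convex set `D` and `J` is `L`-Lipschitz, then for all `x, y, z̄ ∈ D`:
`‖(J(x) - J(y))ᵀR(y)‖ ≤ L L₂ (‖x - z̄‖ + ‖y - z̄‖)‖y - z̄‖ + ‖J(x)ᵀR(z̄)‖ + ‖J(y)ᵀR(z̄)‖`. -/
theorem jacobian_difference_residual_bound {N m : ℕ} (L L₂ : ℝ)
    (R : EuclideanSpace ℝ (Fin N) → EuclideanSpace ℝ (Fin m))
    (J : EuclideanSpace ℝ (Fin N) → (EuclideanSpace ℝ (Fin N) →L[ℝ] EuclideanSpace ℝ (Fin m)))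
    (hC1 : ContDiff ℝ 1 R)
    (hJ : ∀ x, HasFDerivAt R (J x) x)
    (hLip : ∀ x y, ‖J x - J y‖ ≤ L * ‖x - y‖)
    (D : Set (EuclideanSpace ℝ (Fin N))) (hD : Convex ℝ D)
    (hRLip : ∀ x ∈ D, ∀ y ∈ D, ‖R x - R y‖ ≤ L₂ * ‖x - y‖) :
    ∀ x ∈ D, ∀ y ∈ D, ∀ zbar ∈ D,
      ‖ContinuousLinearMap.adjoint (J x - J y) (R y)‖ ≤
        L * L₂ * (‖x - zbar‖ + ‖y - zbar‖) * ‖y - zbar‖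
          + ‖ContinuousLinearMap.adjoint (J x) (R zbar)‖
          + ‖ContinuousLinearMap.adjoint (J y) (R zbar)‖ := by
  intro x hx y hy z hz
  have h1 : ‖ContinuousLinearMap.adjoint (J x - J y) (R y)‖ ≤
      ‖ContinuousLinearMap.adjoint (J x - J y) (R y - R z)‖
        + ‖ContinuousLinearMap.adjoint (J x) (R z)‖
        + ‖ContinuousLinearMap.adjoint (J y) (R z)‖ := by
    have : ContinuousLinearMap.adjoint (J x - J y) (R y) =
        ContinuousLinearMap.adjoint (J x - J y) (R y - R z)
        + ContinuousLinearMap.adjoint (J x) (R z)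
        - ContinuousLinearMap.adjoint (J y) (R z) := by
      simp [map_sub, ContinuousLinearMap.sub_apply]
      abel
    rw [this]
    calc ‖_‖ ≤ ‖ContinuousLinearMap.adjoint (J x - J y) (R y - R z)
        + ContinuousLinearMap.adjoint (J x) (R z)‖
        + ‖ContinuousLinearMap.adjoint (J y) (R z)‖ := norm_sub_le _ _
      _ ≤ _ := by
        have := norm_add_le (ContinuousLinearMap.adjoint (J x - J y) (R y - R z))
          (ContinuousLinearMap.adjoint (J x) (R z))
        linarith
  have h2 : ‖ContinuousLinearMap.adjoint (J x - J y) (R y - R z)‖ ≤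
      L * L₂ * (‖x - z‖ + ‖y - z‖) * ‖y - z‖ := by
    rcases eq_or_ne y z with rfl | hyz
    · simp
    · have hyzpos : 0 < ‖y - z‖ := norm_pos_iff.mpr (sub_ne_zero.mpr hyz)
      have hL : 0 ≤ L := by nlinarith [hLip y z, norm_nonneg (J y - J z)]
      have hL₂ : 0 ≤ L₂ := by nlinarith [hRLip y hy z hz, norm_nonneg (R y - R z)]
      calc ‖ContinuousLinearMap.adjoint (J x - J y) (R y - R z)‖
          ≤ ‖ContinuousLinearMap.adjoint (J x - J y)‖ * ‖R y - R z‖ :=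
            ContinuousLinearMap.le_opNorm _ _
        _ = ‖J x - J y‖ * ‖R y - R z‖ := by
            rw [show (ContinuousLinearMap.adjoint (J x - J y) : _) =
              (ContinuousLinearMap.adjoint :
                (EuclideanSpace ℝ (Fin N) →L[ℝ] EuclideanSpace ℝ (Fin m)) ≃ₗᵢ⋆[ℝ] _)
                (J x - J y) from rfl, LinearIsometryEquiv.norm_map]
        _ ≤ (L * (‖x - z‖ + ‖y - z‖)) * (L₂ * ‖y - z‖) := by
            have hJn : ‖J x - J y‖ ≤ L * (‖x - z‖ + ‖y - z‖) := by
              refine (hLip x y).trans ?_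
              have htri : ‖x - y‖ ≤ ‖x - z‖ + ‖y - z‖ := by
                have := norm_sub_le (x - z) (y - z)
                simpa [sub_sub_sub_cancel_right, norm_sub_rev] using this
              nlinarith
            have hR : ‖R y - R z‖ ≤ L₂ * ‖y - z‖ := hRLip y hy z hz
            nlinarith [norm_nonneg (R y - R z), norm_nonneg (J x - J y),
              norm_nonneg (x - z), norm_nonneg (x - y)]
        _ = L * L₂ * (‖x - z‖ + ‖y - z‖) * ‖y - z‖ := by ring
  linarith
end

section
/- Let R : ℝ^N → ℝ^m be continuously differentiable with L-Lipschitz Jacobian J, let g(x) = J(x)ᵀR(x), let S = {x : g(x) = 0}, x* ∈ S and r > 0. Assume: (error bound) ω dist(x, S) ≤ ‖g(x)‖ for all x ∈ B(x*, r) with ω > 0; ‖R(x) − R(y)‖ ≤ L₂‖x − y‖, ‖g(x) − g(y)‖ ≤ L₃‖x − y‖, and ‖g(x) − g(y) − J(x)ᵀJ(x)(x − y)‖ ≤ L₄‖x − y‖² + ‖(J(x) − J(y))ᵀR(y)‖ for all x, y ∈ B(x*, r). Let x ∈ B(x*, r/2), μ > 0, ρ ≥ 0, c₁ > 0, and let d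 ∈ ℝ^N satisfy ‖d‖ ≤ c₁ dist(x, S) and ‖g(x) + (J(x)ᵀJ(x) + μI)d‖ ≤ ρ‖g(x)‖. Set x⁺ = x + d and assume x⁺ ∈ B(x*, r/2), and let x̄ ∈ S realize ‖x − x̄‖ = dist(x, S). Then ω dist(x⁺, S) ≤ (L₄c₁² + LL₂(2 + c₁)(1 + c₁)) dist(x, S)² + (μc₁ + ρL₃) dist(x, S) + ‖J(x)ᵀR(x̄)‖ + ‖J(x⁺)ᵀR(x̄)‖. -/
set_option maxHeartbeats 1600000 in
/-- Lemma 12. One inexact LM step near the stationary set `S`: under the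
error bound and the local Lipschitz-type estimates, the new distance to `S` satisfies
`ω dist(x⁺, S) ≤ (L₄c₁² + LL₂(2+c₁)(1+c₁)) dist(x,S)² + (μc₁ + ρL₃) dist(x,S)
  + ‖J(x)ᵀR(x̄)‖ + ‖J(x⁺)ᵀR(x̄)‖`. -/
theorem inexact_lm_step_distance_bound {N m : ℕ} (L L₂ L₃ L₄ ω μ ρ c₁ r : ℝ)
    (R : EuclideanSpace ℝ (Fin N) → EuclideanSpace ℝ (Fin m))
    (J : EuclideanSpace ℝ (Fin N) → (EuclideanSpace ℝ (Fin N) →L[ℝ] EuclideanSpace ℝ (Fin m)))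
    (hC1 : ContDiff ℝ 1 R)
    (hJ : ∀ x, HasFDerivAt R (J x) x)
    (hLip : ∀ x y, ‖J x - J y‖ ≤ L * ‖x - y‖)
    (g : EuclideanSpace ℝ (Fin N) → EuclideanSpace ℝ (Fin N))
    (hg : ∀ x, g x = ContinuousLinearMap.adjoint (J x) (R x))
    (S : Set (EuclideanSpace ℝ (Fin N))) (hS : S = {x | g x = 0})
    (xstar : EuclideanSpace ℝ (Fin N)) (hxstar : xstar ∈ S)
    (hr : 0 < r) (hω : 0 < ω)
    (herrbd : ∀ x ∈ Metric.ball xstar r, ω * Metric.infDist x S ≤ ‖g x‖)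
    (hRLip : ∀ x ∈ Metric.ball xstar r, ∀ y ∈ Metric.ball xstar r,
      ‖R x - R y‖ ≤ L₂ * ‖x - y‖)
    (hgLip : ∀ x ∈ Metric.ball xstar r, ∀ y ∈ Metric.ball xstar r,
      ‖g x - g y‖ ≤ L₃ * ‖x - y‖)
    (hgquad : ∀ x ∈ Metric.ball xstar r, ∀ y ∈ Metric.ball xstar r,
      ‖g x - g y - ContinuousLinearMap.adjoint (J x) (J x (x - y))‖ ≤
        L₄ * ‖x - y‖ ^ 2 + ‖ContinuousLinearMap.adjoint (J x - J y) (R y)‖)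
    (x d : EuclideanSpace ℝ (Fin N)) (hx : x ∈ Metric.ball xstar (r / 2))
    (hμ : 0 < μ) (hρ : 0 ≤ ρ) (hc₁ : 0 < c₁)
    (hdbound : ‖d‖ ≤ c₁ * Metric.infDist x S)
    (hres : ‖g x + (ContinuousLinearMap.adjoint (J x) ∘L J x + μ • 1) d‖ ≤ ρ * ‖g x‖)
    (hxplus : x + d ∈ Metric.ball xstar (r / 2))
    (xbar : EuclideanSpace ℝ (Fin N)) (hxbarS : xbar ∈ S)
    (hxbar : ‖x - xbar‖ = Metric.infDist x S) :
    ω * Metric.infDist (x + d) S ≤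
      (L₄ * c₁ ^ 2 + L * L₂ * (2 + c₁) * (1 + c₁)) * Metric.infDist x S ^ 2
        + (μ * c₁ + ρ * L₃) * Metric.infDist x S
        + ‖ContinuousLinearMap.adjoint (J x) (R xbar)‖
        + ‖ContinuousLinearMap.adjoint (J (x + d)) (R xbar)‖ := by
  have hsub : Metric.ball xstar (r / 2) ⊆ Metric.ball xstar r :=
    Metric.ball_subset_ball (by linarith)
  have hxr : x ∈ Metric.ball xstar r := hsub hx
  have hxpr : x + d ∈ Metric.ball xstar r := hsub hxplus
  set D := Metric.infDist x S with hDdef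
  have hD0 : 0 ≤ D := Metric.infDist_nonneg
  by_cases hDz : D = 0
  · -- trivial case: d = 0
    have hd0 : d = 0 := by
      have : ‖d‖ ≤ 0 := by rw [hDz, mul_zero] at hdbound; exact hdbound
      simpa using le_antisymm this (norm_nonneg d)
    rw [hd0, add_zero, ← hDdef, hDz]
    have hA := norm_nonneg (ContinuousLinearMap.adjoint (J x) (R xbar))
    nlinarith [hA]
  · have hDpos : 0 < D := lt_of_le_of_ne hD0 (Ne.symm hDz)
    have hgxbar : g xbar = 0 := by rw [hS] at hxbarS; exact hxbarS
    have hdx : Metric.infDist x S ≤ dist x xstar := Metric.infDist_le_dist_of_mem hxstar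
    have hxxs : dist x xstar < r / 2 := Metric.mem_ball.mp hx
    have hxbarr : xbar ∈ Metric.ball xstar r := by
      rw [Metric.mem_ball]
      calc dist xbar xstar ≤ dist xbar x + dist x xstar := dist_triangle _ _ _
        _ = ‖x - xbar‖ + dist x xstar := by rw [dist_eq_norm, norm_sub_rev]
        _ = D + dist x xstar := by rw [hxbar]
        _ < r := by rw [← hDdef] at hdx; linarith
    -- sign facts
    have hL : 0 ≤ L := by
      by_contra hneg
      push_neg at hneg
      have h1 := hLip x xbar
      rw [hxbar] at h1
      nlinarith [norm_nonneg (J x - J xbar), mul_neg_of_neg_of_pos hneg hDpos]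
    have hL2 : 0 ≤ L₂ := by
      by_contra hneg
      push_neg at hneg
      have h1 := hRLip x hxr xbar hxbarr
      rw [hxbar] at h1
      nlinarith [norm_nonneg (R x - R xbar), mul_neg_of_neg_of_pos hneg hDpos]
    have hL3 : 0 ≤ L₃ := by
      by_contra hneg
      push_neg at hneg
      have h1 := hgLip x hxr xbar hxbarr
      rw [hxbar] at h1
      nlinarith [norm_nonneg (g x - g xbar), mul_neg_of_neg_of_pos hneg hDpos]
    -- error bound at x + d
    have hEB : ω * Metric.infDist (x + d) S ≤ ‖g (x + d)‖ := herrbd _ hxpr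
    -- ‖g x‖ ≤ L₃ * D
    have hgx : ‖g x‖ ≤ L₃ * D := by
      have h1 := hgLip x hxr xbar hxbarr
      rwa [hgxbar, sub_zero, hxbar] at h1
    -- decomposition of g (x+d)
    have hxmxd : x - (x + d) = -d := by abel
    have hid : g (x + d) =
        (g x + (ContinuousLinearMap.adjoint (J x) ∘L J x + μ • 1) d)
          - (g x - g (x + d) - ContinuousLinearMap.adjoint (J x) (J x (x - (x + d))))
          - μ • d := by
      simp only [ContinuousLinearMap.add_apply, ContinuousLinearMap.comp_apply,
        ContinuousLinearMap.smul_apply, ContinuousLinearMap.one_apply, hxmxd, map_neg]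
      abel
    have hdecomp : ‖g (x + d)‖ ≤ ρ * ‖g x‖
        + ‖g x - g (x + d) - ContinuousLinearMap.adjoint (J x) (J x (x - (x + d)))‖
        + μ * ‖d‖ := by
      calc ‖g (x + d)‖ = ‖(g x + (ContinuousLinearMap.adjoint (J x) ∘L J x + μ • 1) d)
          - (g x - g (x + d) - ContinuousLinearMap.adjoint (J x) (J x (x - (x + d))))
          - μ • d‖ := by rw [← hid]
        _ ≤ ‖(g x + (ContinuousLinearMap.adjoint (J x) ∘L J x + μ • 1) d)
            - (g x - g (x + d) - ContinuousLinearMap.adjoint (J x) (J x (x - (x + d))))‖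
            + ‖μ • d‖ := norm_sub_le _ _
        _ ≤ ‖g x + (ContinuousLinearMap.adjoint (J x) ∘L J x + μ • 1) d‖
            + ‖g x - g (x + d) - ContinuousLinearMap.adjoint (J x) (J x (x - (x + d)))‖
            + ‖μ • d‖ := by gcongr; exact norm_sub_le _ _
        _ ≤ ρ * ‖g x‖
            + ‖g x - g (x + d) - ContinuousLinearMap.adjoint (J x) (J x (x - (x + d)))‖
            + μ * ‖d‖ := by
              rw [norm_smul, Real.norm_of_nonneg hμ.le]
              gcongr
    -- quad bound on the q-term
    have hq1 := hgquad x hxr (x + d) hxpr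
    have hnxm : ‖x - (x + d)‖ = ‖d‖ := by rw [hxmxd, norm_neg]
    rw [hnxm] at hq1
    -- cross term split
    have hsplit : ContinuousLinearMap.adjoint (J x - J (x + d)) (R (x + d)) =
        ContinuousLinearMap.adjoint (J x - J (x + d)) (R (x + d) - R xbar)
          + (ContinuousLinearMap.adjoint (J x) (R xbar)
            - ContinuousLinearMap.adjoint (J (x + d)) (R xbar)) := by
      simp only [map_sub, ContinuousLinearMap.sub_apply]
      abel
    have hJd : ‖J x - J (x + d)‖ ≤ L * ‖d‖ := by
      have h1 := hLip x (x + d)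
      rwa [hnxm] at h1
    have hR2 : ‖R (x + d) - R xbar‖ ≤ L₂ * (‖d‖ + D) := by
      have h1 := hRLip (x + d) hxpr xbar hxbarr
      have h2 : ‖x + d - xbar‖ ≤ ‖d‖ + D := by
        calc ‖x + d - xbar‖ = ‖d + (x - xbar)‖ := by congr 1; abel
          _ ≤ ‖d‖ + ‖x - xbar‖ := norm_add_le _ _
          _ = ‖d‖ + D := by rw [hxbar]
      calc ‖R (x + d) - R xbar‖ ≤ L₂ * ‖x + d - xbar‖ := h1
        _ ≤ L₂ * (‖d‖ + D) := by gcongr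
    have hcross : ‖ContinuousLinearMap.adjoint (J x - J (x + d)) (R (x + d))‖ ≤
        (L * ‖d‖) * (L₂ * (‖d‖ + D))
          + (‖ContinuousLinearMap.adjoint (J x) (R xbar)‖
            + ‖ContinuousLinearMap.adjoint (J (x + d)) (R xbar)‖) := by
      rw [hsplit]
      calc _ ≤ ‖ContinuousLinearMap.adjoint (J x - J (x + d)) (R (x + d) - R xbar)‖
            + ‖ContinuousLinearMap.adjoint (J x) (R xbar)
              - ContinuousLinearMap.adjoint (J (x + d)) (R xbar)‖ := norm_add_le _ _
        _ ≤ (L * ‖d‖) * (L₂ * (‖d‖ + D))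
            + (‖ContinuousLinearMap.adjoint (J x) (R xbar)‖
              + ‖ContinuousLinearMap.adjoint (J (x + d)) (R xbar)‖) := by
            gcongr
            · calc ‖ContinuousLinearMap.adjoint (J x - J (x + d)) (R (x + d) - R xbar)‖
                  ≤ ‖ContinuousLinearMap.adjoint (J x - J (x + d))‖ * ‖R (x + d) - R xbar‖ :=
                    ContinuousLinearMap.le_opNorm _ _
                _ = ‖J x - J (x + d)‖ * ‖R (x + d) - R xbar‖ := by
                    rw [ContinuousLinearMap.adjoint.norm_map]
                _ ≤ (L * ‖d‖) * (L₂ * (‖d‖ + D)) := by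
                    apply mul_le_mul hJd hR2 (norm_nonneg _) (mul_nonneg hL (norm_nonneg d))
            · exact norm_sub_le _ _
    -- key arithmetic inequality
    have hkey : L₄ * ‖d‖ ^ 2 + (L * ‖d‖) * (L₂ * (‖d‖ + D)) ≤
        (L₄ * c₁ ^ 2 + L * L₂ * (2 + c₁) * (1 + c₁)) * D ^ 2 := by
      have hdn : 0 ≤ ‖d‖ := norm_nonneg d
      have hdb : ‖d‖ ≤ c₁ * D := hdbound
      rcases le_or_gt 0 L₄ with h4 | h4
      · nlinarith [mul_nonneg hL hL2, mul_nonneg (mul_nonneg hL hL2) (mul_pos hDpos hDpos).le,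
          mul_nonneg h4 (mul_nonneg (sub_nonneg.mpr hdb) (by positivity : (0:ℝ) ≤ c₁ * D + ‖d‖)),
          mul_nonneg (mul_nonneg (mul_nonneg hL hL2) (sub_nonneg.mpr hdb)) hD0,
          mul_nonneg (mul_nonneg (mul_nonneg hL hL2) (sub_nonneg.mpr hdb))
            (by positivity : (0:ℝ) ≤ c₁ * D + ‖d‖ + D)]
      · -- need L₄ ≥ -(L * L₂)
        have hJxnorm : ‖J x‖ ≤ L₂ := by
          have hlipR : LipschitzOnWith (Real.toNNReal L₂) R (Metric.ball xstar r) := by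
            rw [lipschitzOnWith_iff_dist_le_mul]
            intro u hu v hv
            rw [dist_eq_norm, dist_eq_norm, Real.coe_toNNReal _ hL2]
            exact hRLip u hu v hv
          have := (hJ x).le_of_lipschitzOn
            (Metric.isOpen_ball.mem_nhds hxr) hlipR
          rwa [Real.coe_toNNReal _ hL2] at this
        have hTay : ‖R x - R xbar - J x (x - xbar)‖ ≤ (L * D) * D := by
          have hseg : ∀ y ∈ segment ℝ xbar x, ‖J y - J x‖ ≤ L * D := by
            intro y hy
            obtain ⟨a, b, ha, hb, hab, rfl⟩ := hy
            have hyx : a • xbar + b • x - x = a • (xbar - x) := by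
              have hb1 : b = 1 - a := by linarith
              rw [hb1]; module
            have : ‖a • xbar + b • x - x‖ ≤ D := by
              rw [hyx, norm_smul, Real.norm_of_nonneg ha, norm_sub_rev, hxbar]
              nlinarith
            calc ‖J (a • xbar + b • x) - J x‖ ≤ L * ‖a • xbar + b • x - x‖ := hLip _ _
              _ ≤ L * D := by gcongr
          have hmean := Convex.norm_image_sub_le_of_norm_hasFDerivWithin_le
            (f := fun y => R y - J x y) (f' := fun y => J y - J x)
            (fun y _ => ((hJ y).sub ((J x).hasFDerivAt)).hasFDerivWithinAt)
            (fun y hy => hseg y hy) (convex_segment xbar x)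
            (left_mem_segment ℝ xbar x) (right_mem_segment ℝ xbar x)
          have heq : R x - J x x - (R xbar - J x xbar) = R x - R xbar - J x (x - xbar) := by
            rw [map_sub]; abel
          rw [heq] at hmean
          calc ‖R x - R xbar - J x (x - xbar)‖ ≤ (L * D) * ‖x - xbar‖ := hmean
            _ = (L * D) * D := by rw [hxbar]
        have hq2 := hgquad x hxr xbar hxbarr
        rw [hxbar] at hq2
        have hqid : g x - g xbar - ContinuousLinearMap.adjoint (J x) (J x (x - xbar)) =
            ContinuousLinearMap.adjoint (J x) (R x - R xbar - J x (x - xbar))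
              + ContinuousLinearMap.adjoint (J x - J xbar) (R xbar) := by
          rw [hg x, hg xbar]
          simp only [map_sub, ContinuousLinearMap.sub_apply]
          abel
        have hlow : ‖ContinuousLinearMap.adjoint (J x - J xbar) (R xbar)‖
            - ‖ContinuousLinearMap.adjoint (J x) (R x - R xbar - J x (x - xbar))‖ ≤
            ‖g x - g xbar - ContinuousLinearMap.adjoint (J x) (J x (x - xbar))‖ := by
          rw [hqid]
          have h2 : ‖ContinuousLinearMap.adjoint (J x - J xbar) (R xbar)‖ ≤
              ‖ContinuousLinearMap.adjoint (J x) (R x - R xbar - J x (x - xbar))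
                + ContinuousLinearMap.adjoint (J x - J xbar) (R xbar)‖
              + ‖ContinuousLinearMap.adjoint (J x) (R x - R xbar - J x (x - xbar))‖ := by
            calc ‖ContinuousLinearMap.adjoint (J x - J xbar) (R xbar)‖
                = ‖(ContinuousLinearMap.adjoint (J x) (R x - R xbar - J x (x - xbar))
                    + ContinuousLinearMap.adjoint (J x - J xbar) (R xbar))
                  - ContinuousLinearMap.adjoint (J x) (R x - R xbar - J x (x - xbar))‖ := by
                  rw [add_sub_cancel_left]
              _ ≤ _ := norm_sub_le _ _
          linarith [h2]
        have hE' : ‖ContinuousLinearMap.adjoint (J x) (R x - R xbar - J x (x - xbar))‖ ≤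
            L₂ * ((L * D) * D) := by
          calc ‖ContinuousLinearMap.adjoint (J x) (R x - R xbar - J x (x - xbar))‖
              ≤ ‖ContinuousLinearMap.adjoint (J x)‖ * ‖R x - R xbar - J x (x - xbar)‖ :=
                ContinuousLinearMap.le_opNorm _ _
            _ = ‖J x‖ * ‖R x - R xbar - J x (x - xbar)‖ := by
                rw [ContinuousLinearMap.adjoint.norm_map]
            _ ≤ L₂ * ((L * D) * D) := mul_le_mul hJxnorm hTay (norm_nonneg _) hL2
        have hL4 : -(L * L₂) ≤ L₄ := by
          have : -(L₂ * ((L * D) * D)) ≤ L₄ * D ^ 2 := by linarith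
          nlinarith [mul_pos hDpos hDpos]
        nlinarith [mul_nonneg hL hL2, sub_nonneg.mpr hdb,
          mul_nonneg (mul_nonneg (mul_nonneg hL hL2) (sub_nonneg.mpr hdb)) hD0,
          mul_nonneg (mul_nonneg hL hL2) (mul_nonneg hc₁.le (mul_nonneg hD0 hD0)),
          mul_nonneg (mul_nonneg hL hL2) (mul_nonneg hD0 hD0),
          mul_nonneg (by linarith : (0:ℝ) ≤ L * L₂ + L₄)
            (mul_nonneg (sub_nonneg.mpr hdb) (by positivity : (0:ℝ) ≤ c₁ * D + ‖d‖)),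
          mul_pos hDpos hDpos]
    -- final assembly
    have hρg : ρ * ‖g x‖ ≤ ρ * (L₃ * D) := by gcongr
    have hμd : μ * ‖d‖ ≤ μ * (c₁ * D) := by
      apply mul_le_mul_of_nonneg_left hdbound hμ.le
    have hq1' : ‖g x - g (x + d) - ContinuousLinearMap.adjoint (J x) (J x (x - (x + d)))‖ ≤
        (L₄ * c₁ ^ 2 + L * L₂ * (2 + c₁) * (1 + c₁)) * D ^ 2
          + (‖ContinuousLinearMap.adjoint (J x) (R xbar)‖
            + ‖ContinuousLinearMap.adjoint (J (x + d)) (R xbar)‖) := by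
      calc ‖g x - g (x + d) - ContinuousLinearMap.adjoint (J x) (J x (x - (x + d)))‖
          ≤ L₄ * ‖d‖ ^ 2 + ‖ContinuousLinearMap.adjoint (J x - J (x + d)) (R (x + d))‖ := hq1
        _ ≤ L₄ * ‖d‖ ^ 2 + ((L * ‖d‖) * (L₂ * (‖d‖ + D))
            + (‖ContinuousLinearMap.adjoint (J x) (R xbar)‖
              + ‖ContinuousLinearMap.adjoint (J (x + d)) (R xbar)‖)) := by linarith
        _ ≤ _ := by linarith
    linarith
end

section
/- Let R : ℝ^N → ℝ^m be continuously differentiable with L-Lipschitz Jacobian J, let g(x) = J(x)ᵀR(x), let S = {x : g(x) = 0}, x* ∈ S and r > 0. Assume: (error bound) ω dist(x, S) ≤ ‖g(x)‖ for all x ∈ B(x*, r) with ω > 0; ‖R(x) − R(y)‖ ≤ L₂‖x − y‖, ‖g(x) − g(y)‖ ≤ L₃‖x − y‖, and ‖g(x) − g(y) − J(x)ᵀJ(x)(x − y)‖ ≤ L₄‖x − y‖² + ‖(J(x) − J(y))ᵀR(y)‖ for all x, y ∈ B(x*, r); and ‖(J(x) − J(z̄))ᵀR(z̄)‖ ≤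 σ‖x − z̄‖ for all x ∈ B(x*, r) and z̄ ∈ B(x*, r) ∩ S. Let x ∈ B(x*, r/2), 0 < μ ≤ μ_max, ρ ≥ 0, c₁ > 0, and let d ∈ ℝ^N satisfy ‖d‖ ≤ c₁ dist(x, S) and ‖g(x) + (J(x)ᵀJ(x) + μI)d‖ ≤ ρ‖g(x)‖; set x⁺ = x + d and assume x⁺ ∈ B(x*, r/2). Suppose η ∈ (0,1) satisfies ηω > c₁μ_max + ρL₃ + (2 + c₁)σ, and define ε = (ηω − (c₁μ_max + ρL₃ + (2 + c₁)σ))/(L₄c₁² + LL₂(1 + c₁)(2 + c₁)). If dist(x, S) ≤ ε, then dist(x⁺, S) ≤ η dist(x, S). -/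
set_option maxHeartbeats 1000000


private lemma lm_arith (t s c₁ σ P L₃ L₄ μ μmax ρ ω η : ℝ)
    (ht : 0 < t) (hs0 : 0 ≤ s) (hs : s ≤ c₁ * t) (hσ0 : 0 ≤ σ) (hP : 0 ≤ P)
    (hμ0 : 0 < μ) (hμ : μ ≤ μmax) (hρ : 0 ≤ ρ) (hc₁ : 0 < c₁)
    (hΔ : c₁ * μmax + ρ * L₃ + (2 + c₁) * σ < η * ω)
    (hbt : -L₄ * t ≤ σ)
    (htε : t ≤ (η * ω - (c₁ * μmax + ρ * L₃ + (2 + c₁) * σ)) /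
      (L₄ * c₁ ^ 2 + P * (1 + c₁) * (2 + c₁))) :
    ρ * (L₃ * t) + μ * s + (L₄ * s ^ 2 + (P * s * (s + t) + σ * t + σ * (s + t)))
      ≤ η * ω * t := by
  set Δ := η * ω - (c₁ * μmax + ρ * L₃ + (2 + c₁) * σ) with hΔdef
  have hΔ0 : 0 < Δ := by rw [hΔdef]; linarith
  set D := L₄ * c₁ ^ 2 + P * (1 + c₁) * (2 + c₁) with hDdef
  have hD : 0 < D := by
    rcases lt_or_ge 0 D with h | h
    · exact h
    · exfalso
      have : Δ / D ≤ 0 := div_nonpos_of_nonneg_of_nonpos hΔ0.le h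
      linarith
  have hDt : t * D ≤ Δ := (le_div_iff₀ hD).mp htε
  have hμs : μ * s ≤ μmax * (c₁ * t) := mul_le_mul hμ hs hs0 (hμ0.le.trans hμ)
  have hFgoal : (P + L₄) * s ^ 2 + (P * t + σ) * s ≤ Δ * t + σ * (c₁ * t) := by
    rcases le_or_gt 0 ((P + L₄) * (c₁ * t + s) + (P * t + σ)) with h1 | h1
    · have hkey : (P + L₄) * s ^ 2 + (P * t + σ) * s ≤
          (P + L₄) * (c₁ * t) ^ 2 + (P * t + σ) * (c₁ * t) := by
        nlinarith [mul_nonneg (sub_nonneg.mpr hs) h1]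
      have h2 : (P + L₄) * (c₁ * t) ^ 2 + (P * t + σ) * (c₁ * t) ≤ D * t ^ 2 + σ * (c₁ * t) := by
        have hp2 : 0 ≤ P * ((2 + 2 * c₁) * t ^ 2) := by positivity
        rw [hDdef]; nlinarith [hp2]
      have h3 : D * t ^ 2 ≤ Δ * t := by nlinarith [hDt]
      linarith
    · have hb : P + L₄ < 0 := by
        by_contra hcon
        push_neg at hcon
        nlinarith [mul_nonneg hcon (show (0:ℝ) ≤ c₁ * t + s by positivity),
          mul_nonneg hP ht.le]
      have hPt : P * t ≤ σ := by nlinarith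
      have hb0 : 0 < -(P + L₄) := by linarith
      have hβ0 : 0 ≤ P * t + σ := add_nonneg (mul_nonneg hP ht.le) hσ0
      have h2b : P * t + σ ≤ 2 * (-(P + L₄)) * (c₁ * t) := by
        have := mul_le_mul_of_nonneg_left (show c₁ * t + s ≤ 2 * (c₁ * t) by linarith) hb0.le
        nlinarith
      have hβσ : P * t + σ ≤ 2 * σ := by linarith
      have hv : 4 * (-(P + L₄)) * ((P + L₄) * s ^ 2 + (P * t + σ) * s) ≤ (P * t + σ) ^ 2 := by
        nlinarith [sq_nonneg (P * t + σ + 2 * (P + L₄) * s)]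
      have hq' := mul_le_mul h2b hβσ hβ0 (by positivity : (0:ℝ) ≤ 2 * (-(P + L₄)) * (c₁ * t))
      have hq : (P * t + σ) ^ 2 ≤ 4 * (-(P + L₄)) * (σ * (c₁ * t)) := by nlinarith [hq']
      have hF : (P + L₄) * s ^ 2 + (P * t + σ) * s ≤ σ * (c₁ * t) := by
        have h4 : (0:ℝ) < 4 * (-(P + L₄)) := by linarith
        have := le_of_mul_le_mul_left
          (show 4 * (-(P + L₄)) * ((P + L₄) * s ^ 2 + (P * t + σ) * s) ≤
            4 * (-(P + L₄)) * (σ * (c₁ * t)) by linarith) h4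
        exact this
      nlinarith [mul_pos hΔ0 ht]
  nlinarith [hFgoal, hμs]



/-- Lemma 13. Under the error bound and Lipschitz-type local assumptions,
if `ηω > c₁ μ_max + ρ L₃ + (2 + c₁)σ` and
`ε = (ηω - (c₁ μ_max + ρ L₃ + (2 + c₁)σ)) / (L₄c₁² + LL₂(1 + c₁)(2 + c₁))`, then
`dist(x, S) ≤ ε` implies `dist(x + d, S) ≤ η dist(x, S)` for the inexact LM step `d`. -/
theorem inexact_lm_step_linear_contraction {N m : ℕ}
    (L L₂ L₃ L₄ ω μ μmax ρ c₁ r σ η ε : ℝ)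
    (R : EuclideanSpace ℝ (Fin N) → EuclideanSpace ℝ (Fin m))
    (J : EuclideanSpace ℝ (Fin N) → (EuclideanSpace ℝ (Fin N) →L[ℝ] EuclideanSpace ℝ (Fin m)))
    (hC1 : ContDiff ℝ 1 R)
    (hJ : ∀ x, HasFDerivAt R (J x) x)
    (hLip : ∀ x y, ‖J x - J y‖ ≤ L * ‖x - y‖)
    (g : EuclideanSpace ℝ (Fin N) → EuclideanSpace ℝ (Fin N))
    (hg : ∀ x, g x = ContinuousLinearMap.adjoint (J x) (R x))
    (S : Set (EuclideanSpace ℝ (Fin N))) (hS : S = {x | g x = 0})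
    (xstar : EuclideanSpace ℝ (Fin N)) (hxstar : xstar ∈ S)
    (hr : 0 < r) (hω : 0 < ω)
    (herrbd : ∀ x ∈ Metric.ball xstar r, ω * Metric.infDist x S ≤ ‖g x‖)
    (hRLip : ∀ x ∈ Metric.ball xstar r, ∀ y ∈ Metric.ball xstar r,
      ‖R x - R y‖ ≤ L₂ * ‖x - y‖)
    (hgLip : ∀ x ∈ Metric.ball xstar r, ∀ y ∈ Metric.ball xstar r,
      ‖g x - g y‖ ≤ L₃ * ‖x - y‖)
    (hgquad : ∀ x ∈ Metric.ball xstar r, ∀ y ∈ Metric.ball xstar r,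
      ‖g x - g y - ContinuousLinearMap.adjoint (J x) (J x (x - y))‖ ≤
        L₄ * ‖x - y‖ ^ 2 + ‖ContinuousLinearMap.adjoint (J x - J y) (R y)‖)
    (hσ : ∀ x ∈ Metric.ball xstar r, ∀ zbar ∈ Metric.ball xstar r ∩ S,
      ‖ContinuousLinearMap.adjoint (J x - J zbar) (R zbar)‖ ≤ σ * ‖x - zbar‖)
    (x d : EuclideanSpace ℝ (Fin N)) (hx : x ∈ Metric.ball xstar (r / 2))
    (hμ : 0 < μ) (hμmax : μ ≤ μmax) (hρ : 0 ≤ ρ) (hc₁ : 0 < c₁)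
    (hdbound : ‖d‖ ≤ c₁ * Metric.infDist x S)
    (hres : ‖g x + (ContinuousLinearMap.adjoint (J x) ∘L J x + μ • 1) d‖ ≤ ρ * ‖g x‖)
    (hxplus : x + d ∈ Metric.ball xstar (r / 2))
    (hη : η ∈ Set.Ioo (0 : ℝ) 1)
    (hηω : c₁ * μmax + ρ * L₃ + (2 + c₁) * σ < η * ω)
    (hε : ε = (η * ω - (c₁ * μmax + ρ * L₃ + (2 + c₁) * σ)) /
      (L₄ * c₁ ^ 2 + L * L₂ * (1 + c₁) * (2 + c₁)))
    (hdist : Metric.infDist x S ≤ ε) :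
    Metric.infDist (x + d) S ≤ η * Metric.infDist x S := by
  set t := Metric.infDist x S with ht_def
  have ht0 : 0 ≤ t := Metric.infDist_nonneg
  rcases eq_or_lt_of_le ht0 with h0 | ht
  · -- trivial case t = 0
    have hd0 : d = 0 := by
      have h1 : ‖d‖ ≤ 0 := by rw [← h0] at hdbound; simpa using hdbound
      simpa using le_antisymm h1 (norm_nonneg d)
    rw [hd0, add_zero, ← ht_def, ← h0, mul_zero]
  · -- main case
    have hballs : Metric.ball xstar (r / 2) ⊆ Metric.ball xstar r :=
      Metric.ball_subset_ball (by linarith)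
    have hxball : x ∈ Metric.ball xstar r := hballs hx
    have hxpball : x + d ∈ Metric.ball xstar r := hballs hxplus
    -- closedness of S and nearest point
    have hJc : Continuous J := by
      have hJeq : J = fderiv ℝ R := funext fun y => ((hJ y).fderiv).symm
      rw [hJeq]
      exact (hC1.fderiv_right (m := 0) (by norm_num)).continuous
    have hgc : Continuous g := by
      have : Continuous fun y => ContinuousLinearMap.adjoint (J y) (R y) :=
        (ContinuousLinearMap.adjoint.continuous.comp hJc).clm_apply hC1.continuous
      simpa [funext hg] using this
    have hSc : IsClosed S := by
      rw [hS]; exact isClosed_eq hgc continuous_const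
    obtain ⟨xb, hxbS, hxb⟩ := hSc.exists_infDist_eq_dist ⟨xstar, hxstar⟩ x
    have htx : t = dist x xb := hxb
    have htle : t ≤ dist x xstar := Metric.infDist_le_dist_of_mem hxstar
    have hxxs : dist x xstar < r / 2 := by simpa [Metric.mem_ball] using hx
    have hxbball : xb ∈ Metric.ball xstar r := by
      have h1 : dist xb xstar ≤ dist xb x + dist x xstar := dist_triangle _ _ _
      have h2 : dist xb x = t := by rw [dist_comm]; exact htx.symm
      rw [Metric.mem_ball]
      linarith
    set s := ‖d‖ with hs_def
    have hs0 : 0 ≤ s := norm_nonneg d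
    have hst : s ≤ c₁ * t := hdbound
    have hgxb : g xb = 0 := by rw [hS] at hxbS; exact hxbS
    have hxxb : ‖x - xb‖ = t := by rw [htx, dist_eq_norm]
    have hxpxb : ‖x + d - xb‖ ≤ s + t := by
      have h1 : x + d - xb = d + (x - xb) := by abel
      rw [h1]
      calc ‖d + (x - xb)‖ ≤ ‖d‖ + ‖x - xb‖ := norm_add_le _ _
        _ = s + t := by rw [hxxb]
    -- sign facts
    have hσ0 : 0 ≤ σ := by
      have h1 := hσ x hxball xb ⟨hxbball, hxbS⟩
      rw [hxxb] at h1
      nlinarith [norm_nonneg (ContinuousLinearMap.adjoint (J x - J xb) (R xb))]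
    have hL0 : 0 ≤ L := by
      have h1 := hLip x xb
      rw [hxxb] at h1
      nlinarith [norm_nonneg (J x - J xb)]
    have hL20 : 0 ≤ L₂ := by
      have h1 := hRLip x hxball xb hxbball
      rw [hxxb] at h1
      nlinarith [norm_nonneg (R x - R xb)]
    have hbt : -L₄ * t ≤ σ := by
      have h1 := hgquad x hxball xb hxbball
      have h2 := hσ x hxball xb ⟨hxbball, hxbS⟩
      rw [hxxb] at h1 h2
      nlinarith [norm_nonneg (g x - g xb - ContinuousLinearMap.adjoint (J x) (J x (x - xb)))]
    -- bound on ‖g x‖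
    have hgx : ‖g x‖ ≤ L₃ * t := by
      have h1 := hgLip x hxball xb hxbball
      rw [hgxb, sub_zero, hxxb] at h1
      exact h1
    -- key identity
    have hxd : x - (x + d) = -d := by abel
    have hkey : g (x + d) =
        (g x + (ContinuousLinearMap.adjoint (J x) ∘L J x + μ • 1) d)
          - (g x - g (x + d) - ContinuousLinearMap.adjoint (J x) (J x (x - (x + d))))
          - μ • d := by
      rw [hxd]
      simp only [map_neg, ContinuousLinearMap.add_apply, ContinuousLinearMap.comp_apply,
        ContinuousLinearMap.smul_apply, ContinuousLinearMap.one_apply]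
      abel
    have hquad := hgquad x hxball (x + d) hxpball
    have hnormd : ‖x - (x + d)‖ = s := by rw [hxd, norm_neg]
    rw [hnormd] at hquad
    have hμd : ‖μ • d‖ = μ * s := by
      rw [norm_smul, Real.norm_eq_abs, abs_of_pos hμ, hs_def]
    have hE : ‖g (x + d)‖ ≤ ρ * (L₃ * t) + μ * s +
        (L₄ * s ^ 2 + ‖ContinuousLinearMap.adjoint (J x - J (x + d)) (R (x + d))‖) := by
      have htri : ‖g x + (ContinuousLinearMap.adjoint (J x) ∘L J x + μ • 1) d
            - (g x - g (x + d) - ContinuousLinearMap.adjoint (J x) (J x (x - (x + d))))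
            - μ • d‖
          ≤ ‖g x + (ContinuousLinearMap.adjoint (J x) ∘L J x + μ • 1) d‖
            + ‖g x - g (x + d) - ContinuousLinearMap.adjoint (J x) (J x (x - (x + d)))‖
            + ‖μ • d‖ := by
        refine (norm_sub_le _ _).trans ?_
        have := norm_sub_le (g x + (ContinuousLinearMap.adjoint (J x) ∘L J x + μ • 1) d)
          (g x - g (x + d) - ContinuousLinearMap.adjoint (J x) (J x (x - (x + d))))
        linarith
      rw [← hkey] at htri
      calc ‖g (x + d)‖
          ≤ ‖g x + (ContinuousLinearMap.adjoint (J x) ∘L J x + μ • 1) d‖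
            + ‖g x - g (x + d) - ContinuousLinearMap.adjoint (J x) (J x (x - (x + d)))‖
            + ‖μ • d‖ := htri
        _ ≤ ρ * ‖g x‖ + (L₄ * s ^ 2
              + ‖ContinuousLinearMap.adjoint (J x - J (x + d)) (R (x + d))‖) + μ * s := by
            rw [hμd]; gcongr
        _ ≤ ρ * (L₃ * t) + μ * s + (L₄ * s ^ 2
              + ‖ContinuousLinearMap.adjoint (J x - J (x + d)) (R (x + d))‖) := by
            have : ρ * ‖g x‖ ≤ ρ * (L₃ * t) := mul_le_mul_of_nonneg_left hgx hρ
            linarith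
    -- split the adjoint term
    have hsplit : ‖ContinuousLinearMap.adjoint (J x - J (x + d)) (R (x + d))‖ ≤
        L * L₂ * s * (s + t) + σ * t + σ * (s + t) := by
      have hdecomp : ContinuousLinearMap.adjoint (J x - J (x + d)) (R (x + d)) =
          ContinuousLinearMap.adjoint (J x - J (x + d)) (R (x + d) - R xb)
          + (ContinuousLinearMap.adjoint (J x - J xb) (R xb)
            - ContinuousLinearMap.adjoint (J (x + d) - J xb) (R xb)) := by
        have e1 : ContinuousLinearMap.adjoint (J x - J (x + d)) (R (x + d) - R xb) =
            ContinuousLinearMap.adjoint (J x - J (x + d)) (R (x + d))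
            - ContinuousLinearMap.adjoint (J x - J (x + d)) (R xb) := map_sub _ _ _
        have e2 : ContinuousLinearMap.adjoint (J x - J (x + d)) (R xb) =
            ContinuousLinearMap.adjoint (J x - J xb) (R xb)
            - ContinuousLinearMap.adjoint (J (x + d) - J xb) (R xb) := by
          rw [show J x - J (x + d) = (J x - J xb) - (J (x + d) - J xb) by abel, map_sub,
            ContinuousLinearMap.sub_apply]
        rw [e1, e2]
        abel
      rw [hdecomp]
      have hA : ‖ContinuousLinearMap.adjoint (J x - J (x + d)) (R (x + d) - R xb)‖ ≤
          L * L₂ * s * (s + t) := by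
        calc ‖ContinuousLinearMap.adjoint (J x - J (x + d)) (R (x + d) - R xb)‖
            ≤ ‖ContinuousLinearMap.adjoint (J x - J (x + d))‖ * ‖R (x + d) - R xb‖ :=
              ContinuousLinearMap.le_opNorm _ _
          _ = ‖J x - J (x + d)‖ * ‖R (x + d) - R xb‖ := by
              rw [ContinuousLinearMap.adjoint.norm_map]
          _ ≤ (L * s) * (L₂ * (s + t)) := by
              apply mul_le_mul
              · have := hLip x (x + d); rwa [hxd, norm_neg, ← hs_def] at this
              · calc ‖R (x + d) - R xb‖ ≤ L₂ * ‖x + d - xb‖ := hRLip (x + d) hxpball xb hxbball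
                  _ ≤ L₂ * (s + t) := mul_le_mul_of_nonneg_left hxpxb hL20
              · exact norm_nonneg _
              · positivity
          _ = L * L₂ * s * (s + t) := by ring
      have hB : ‖ContinuousLinearMap.adjoint (J x - J xb) (R xb)‖ ≤ σ * t := by
        have := hσ x hxball xb ⟨hxbball, hxbS⟩
        rwa [hxxb] at this
      have hC : ‖ContinuousLinearMap.adjoint (J (x + d) - J xb) (R xb)‖ ≤ σ * (s + t) := by
        calc ‖ContinuousLinearMap.adjoint (J (x + d) - J xb) (R xb)‖
            ≤ σ * ‖x + d - xb‖ := hσ (x + d) hxpball xb ⟨hxbball, hxbS⟩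
          _ ≤ σ * (s + t) := mul_le_mul_of_nonneg_left hxpxb hσ0
      calc ‖ContinuousLinearMap.adjoint (J x - J (x + d)) (R (x + d) - R xb)
            + (ContinuousLinearMap.adjoint (J x - J xb) (R xb)
              - ContinuousLinearMap.adjoint (J (x + d) - J xb) (R xb))‖
          ≤ ‖ContinuousLinearMap.adjoint (J x - J (x + d)) (R (x + d) - R xb)‖
            + (‖ContinuousLinearMap.adjoint (J x - J xb) (R xb)‖
              + ‖ContinuousLinearMap.adjoint (J (x + d) - J xb) (R xb)‖) :=
            le_trans (norm_add_le _ _) (by gcongr; exact norm_sub_le _ _)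
        _ ≤ L * L₂ * s * (s + t) + σ * t + σ * (s + t) := by linarith
    -- assemble
    have hmain : ω * Metric.infDist (x + d) S ≤
        ρ * (L₃ * t) + μ * s + (L₄ * s ^ 2 + (L * L₂ * s * (s + t) + σ * t + σ * (s + t))) := by
      have h1 := herrbd (x + d) hxpball
      linarith
    have harith : ρ * (L₃ * t) + μ * s +
        (L₄ * s ^ 2 + (L * L₂ * s * (s + t) + σ * t + σ * (s + t))) ≤ η * ω * t := by
      apply lm_arith t s c₁ σ (L * L₂) L₃ L₄ μ μmax ρ ω η ht hs0 hst hσ0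
        (mul_nonneg hL0 hL20) hμ hμmax hρ hc₁ hηω hbt
      rw [← hε]; exact hdist
    have hfin : ω * Metric.infDist (x + d) S ≤ ω * (η * t) := by
      calc ω * Metric.infDist (x + d) S ≤ η * ω * t := le_trans hmain harith
        _ = ω * (η * t) := by ring
    exact le_of_mul_le_mul_left hfin hω
end

section
/- Let J ∈ ℝ^{m×N}, let H, B ∈ ℝ^{N×N} with H symmetric positive semidefinite and JᵀJ = H + B, let b ∈ (0,1), M > 0 with ‖B‖ ≤ M‖JᵀJ‖, and let μ ≥ ((1+b)²/(1−b))‖J‖² with μ > 0. Then ‖B‖·‖(H + μI)^{-1}‖ ≤ M(1 − b)/(1 + b)² < M. In particular, for any g ∈ ℝ^N, the residual of the corrected splitted system satisfies ‖(H + B + μI)(H + μI)^{-1}(β*B − I)g + g‖ ≤ (M(1 − b)/(1 + b)²)‖g‖, where β* is any minimizer over β ∈ ℝ of ‖(H + B + μI)(H + μI)^{-1}(βB − I)g + g‖². -/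
open scoped InnerProductSpace

set_option maxHeartbeats 1000000

/-- bound (61). If `JᵀJ = H + B`, `‖B‖ ≤ M ‖JᵀJ‖` and
`μ ≥ ((1+b)²/(1-b))‖J‖²`, then `‖B‖‖(H + μI)⁻¹‖ ≤ M(1-b)/(1+b)² < M`, and the residual of
the corrected splitted system at the optimal `β*` satisfies
`‖(H + B + μI)(H + μI)⁻¹(β*B - I)g + g‖ ≤ (M(1-b)/(1+b)²)‖g‖`. -/
theorem splitted_system_residual_bound {N m : ℕ}
    (J : EuclideanSpace ℝ (Fin N) →L[ℝ] EuclideanSpace ℝ (Fin m))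
    (H B : EuclideanSpace ℝ (Fin N) →L[ℝ] EuclideanSpace ℝ (Fin N))
    (b M μ : ℝ) (g : EuclideanSpace ℝ (Fin N))
    (hH : IsSelfAdjoint H) (hPSD : ∀ v, 0 ≤ ⟪H v, v⟫_ℝ)
    (hJJ : ContinuousLinearMap.adjoint J ∘L J = H + B)
    (hb : b ∈ Set.Ioo (0 : ℝ) 1) (hM : 0 < M)
    (hBnorm : ‖B‖ ≤ M * ‖ContinuousLinearMap.adjoint J ∘L J‖)
    (hμJ : (1 + b) ^ 2 / (1 - b) * ‖J‖ ^ 2 ≤ μ) (hμ : 0 < μ)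
    (Ainv : EuclideanSpace ℝ (Fin N) →L[ℝ] EuclideanSpace ℝ (Fin N))
    (hAinv₁ : (H + μ • 1) * Ainv = 1) (hAinv₂ : Ainv * (H + μ • 1) = 1)
    (βstar : ℝ)
    (hβstar : ∀ β : ℝ,
      ‖(H + B + μ • 1) (Ainv ((βstar • B - 1) g)) + g‖ ^ 2 ≤
        ‖(H + B + μ • 1) (Ainv ((β • B - 1) g)) + g‖ ^ 2) :
    ‖B‖ * ‖Ainv‖ ≤ M * (1 - b) / (1 + b) ^ 2 ∧
    M * (1 - b) / (1 + b) ^ 2 < M ∧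
    ‖(H + B + μ • 1) (Ainv ((βstar • B - 1) g)) + g‖ ≤ M * (1 - b) / (1 + b) ^ 2 * ‖g‖ := by
  obtain ⟨hb0, hb1⟩ := hb
  have hd : (0:ℝ) < 1 - b := by linarith
  have hc : (0:ℝ) < (1 + b) ^ 2 := by positivity
  have hJn : ‖ContinuousLinearMap.adjoint J ∘L J‖ = ‖J‖ ^ 2 := by
    rw [ContinuousLinearMap.norm_adjoint_comp_self, sq]
  have hBJ : ‖B‖ ≤ M * ‖J‖ ^ 2 := by rw [← hJn]; exact hBnorm
  have hAinvNorm : ‖Ainv‖ ≤ 1 / μ := by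
    apply ContinuousLinearMap.opNorm_le_bound _ (by positivity)
    intro w
    set v := Ainv w with hv
    have hHv : (H + μ • 1) v = w := by
      have := congrArg (fun T => T w) hAinv₁
      simpa [ContinuousLinearMap.mul_apply] using this
    have h1 : μ * ‖v‖ ^ 2 ≤ ⟪(H + μ • 1) v, v⟫_ℝ := by
      have he : ⟪(H + μ • 1) v, v⟫_ℝ = ⟪H v, v⟫_ℝ + μ * ‖v‖ ^ 2 := by
        rw [ContinuousLinearMap.add_apply, inner_add_left,
          ContinuousLinearMap.smul_apply, ContinuousLinearMap.one_apply,
          real_inner_smul_left, real_inner_self_eq_norm_sq]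
      rw [he]
      linarith [hPSD v]
    have h2 : ⟪(H + μ • 1) v, v⟫_ℝ ≤ ‖w‖ * ‖v‖ := by
      rw [hHv]; exact real_inner_le_norm w v
    have key : μ * ‖v‖ ≤ ‖w‖ := by
      rcases eq_or_lt_of_le (norm_nonneg v) with h0 | h0
      · rw [← h0]; simpa using norm_nonneg w
      · nlinarith
    rw [one_div, ← div_eq_inv_mul, le_div_iff₀ hμ]
    nlinarith
  have h3 : (1 + b) ^ 2 * ‖J‖ ^ 2 ≤ μ * (1 - b) := by
    rw [div_mul_eq_mul_div, div_le_iff₀ hd] at hμJ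
    linarith
  have goal1 : ‖B‖ * ‖Ainv‖ ≤ M * (1 - b) / (1 + b) ^ 2 := by
    have step1 : ‖B‖ * ‖Ainv‖ ≤ M * ‖J‖ ^ 2 * (1 / μ) :=
      mul_le_mul hBJ hAinvNorm (norm_nonneg _) (by positivity)
    refine step1.trans ?_
    rw [mul_one_div, div_le_div_iff₀ hμ hc]
    nlinarith [mul_le_mul_of_nonneg_left h3 hM.le]
  have goal2 : M * (1 - b) / (1 + b) ^ 2 < M := by
    rw [div_lt_iff₀ hc]
    nlinarith [mul_pos hM hb0]
  refine ⟨goal1, goal2, ?_⟩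
  have hres0 : (H + B + μ • 1) (Ainv (((0:ℝ) • B - 1) g)) + g = -(B (Ainv g)) := by
    have h1 : ((0:ℝ) • B - 1) g = -g := by
      simp [ContinuousLinearMap.sub_apply]
    rw [h1]
    have h3' : (H + μ • 1) (Ainv (-g)) = -g := by
      have := congrArg (fun T => T (-g)) hAinv₁
      simpa [ContinuousLinearMap.mul_apply] using this
    have h2 : (H + B + μ • 1) (Ainv (-g))
        = (H + μ • 1) (Ainv (-g)) + B (Ainv (-g)) := by
      rw [add_right_comm H B (μ • 1)]
      simp [ContinuousLinearMap.add_apply]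
    rw [h2, h3', map_neg, map_neg]
    abel
  have hsq := hβstar 0
  rw [hres0, norm_neg] at hsq
  have hr : ‖(H + B + μ • 1) (Ainv ((βstar • B - 1) g)) + g‖ ≤ ‖B (Ainv g)‖ := by
    nlinarith [norm_nonneg ((H + B + μ • 1) (Ainv ((βstar • B - 1) g)) + g),
      norm_nonneg (B (Ainv g))]
  refine hr.trans ?_
  calc ‖B (Ainv g)‖ ≤ ‖B‖ * ‖Ainv g‖ := B.le_opNorm _
    _ ≤ ‖B‖ * (‖Ainv‖ * ‖g‖) :=
        mul_le_mul_of_nonneg_left (Ainv.le_opNorm g) (norm_nonneg B)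
    _ = ‖B‖ * ‖Ainv‖ * ‖g‖ := by ring
    _ ≤ M * (1 - b) / (1 + b) ^ 2 * ‖g‖ :=
        mul_le_mul_of_nonneg_right goal1 (norm_nonneg g)
end
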